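/- arXiv:2412.15029 — 9 statements merged into one kernel-verified Lean document; each statement's English description precedes it below -/
import Mathlib

section
/- Let E be a Banach space over ℂ, let η be an infinite cardinal, and let (L_α)_{α<η} be an ℓ¹(η)-selective base in E with constant K₁ > 0. For each α < η let M_α be the closure of the linear span of L_α. Then for every family (S_α)_{α<η}, where each S_α is a continuous linear functional on M_α and sup_{α<η} ‖S_α‖ < ∞, there exists a continuous linear functional T on E such that the restriction of T to M_α equals S_α for every α < η; moreover T can be chosen with ‖T‖ ≤ K₁ · sup_{α<η} ‖S_α‖. -/
/-!
STATEMENT 2. Let `E` be a Banach space over `ℂ`, `η` an infinite cardinal and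
`(L_α)_{α<η}` an `ℓ¹(η)`-selective base in `E` with constant `K₁ > 0`.  For each `α`
let `M_α` be the closure of the linear span of `L_α`.  Then every uniformly bounded
family `(S_α)` of continuous linear functionals `S_α : M_α →L[ℂ] ℂ` extends to a
single `T ∈ E*` with `T|_{M_α} = S_α` for all `α` and `‖T‖ ≤ K₁ * ⨆ α, ‖S α‖`.
-/

universe u

open Filter Topology

/-- `(L i)_{i : ι}` is an `ℓ¹(η)`-selective base with constant `K₁ > 0`:
the sets are nonempty, their union is bounded, their linear spans pairwise intersect
in `{0}`, and finitely many vectors taken from distinct spans satisfy the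
`ℓ¹`-estimate `∑ ‖x i‖ ≤ K₁ * ‖∑ x i‖`. -/
def IsSelectiveBase {E : Type u} [NormedAddCommGroup E] [NormedSpace ℂ E]
    {ι : Type*} (L : ι → Set E) (K₁ : ℝ) : Prop :=
  0 < K₁ ∧ (∀ i, (L i).Nonempty) ∧ (∃ C : ℝ, ∀ i, ∀ x ∈ L i, ‖x‖ ≤ C) ∧
  (∀ i j, i ≠ j → Submodule.span ℂ (L i) ⊓ Submodule.span ℂ (L j) = ⊥) ∧
  ∀ (s : Finset ι) (x : ι → E), (∀ i ∈ s, x i ∈ Submodule.span ℂ (L i)) →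
    ∑ i ∈ s, ‖x i‖ ≤ K₁ * ‖∑ i ∈ s, x i‖

theorem stmt2 {E : Type u} [NormedAddCommGroup E] [NormedSpace ℂ E] [CompleteSpace E]
    {ι : Type u} (η : Cardinal.{u}) (hη : Cardinal.aleph0 ≤ η)
    (hι : Cardinal.mk ι = η)
    (L : ι → Set E) (K₁ : ℝ) (hbase : IsSelectiveBase L K₁)
    (S : ∀ α : ι, ↥((Submodule.span ℂ (L α)).topologicalClosure) →L[ℂ] ℂ)
    (hS : BddAbove (Set.range fun α => ‖S α‖)) :
    ∃ T : E →L[ℂ] ℂ,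
      (∀ (α : ι) (x : ↥((Submodule.span ℂ (L α)).topologicalClosure)),
        T (x : E) = S α x) ∧
      ‖T‖ ≤ K₁ * ⨆ α, ‖S α‖ := by
  classical
  obtain ⟨hK, -, -, -, hl1⟩ := hbase
  have hne : Nonempty ι := Cardinal.mk_ne_zero_iff.mp
    (by rw [hι]; exact (Cardinal.aleph0_pos.trans_le hη).ne')
  set N : ι → Submodule ℂ E := fun i => Submodule.span ℂ (L i) with hN
  set C : ℝ := ⨆ α, ‖S α‖ with hC
  have hSC : ∀ α, ‖S α‖ ≤ C := fun α => le_ciSup hS α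
  have hC0 : 0 ≤ C := le_trans (norm_nonneg (S (Classical.arbitrary ι))) (hSC (Classical.arbitrary ι))
  set Φ : (Π₀ i, N i) →ₗ[ℂ] E := DFinsupp.lsum ℕ fun i => (N i).subtype with hΦdef
  have hΦ_apply : ∀ c : Π₀ i, N i, Φ c = ∑ i ∈ c.support, (c i : E) := by
    intro c
    simp [hΦdef, DFinsupp.lsum_apply_apply, DFinsupp.sumAddHom_apply, DFinsupp.sum]
  have hsum_bound : ∀ c : Π₀ i, N i,
      ∑ i ∈ c.support, ‖(c i : E)‖ ≤ K₁ * ‖Φ c‖ := by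
    intro c
    rw [hΦ_apply]
    exact hl1 c.support (fun i => (c i : E)) (fun i _ => (c i).2)
  have hΦinj : Function.Injective Φ := by
    rw [injective_iff_map_eq_zero]
    intro c hc
    have h0 : ∑ i ∈ c.support, ‖(c i : E)‖ ≤ 0 := by
      simpa [hc] using hsum_bound c
    ext i
    by_cases hi : i ∈ c.support
    · have : ‖(c i : E)‖ = 0 := le_antisymm
        (le_trans (Finset.single_le_sum (fun j _ => norm_nonneg ((c j : E))) hi) h0)
        (norm_nonneg _)
      simpa using norm_eq_zero.mp this
    · simpa using DFinsupp.notMem_support_iff.mp hi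
  set incl : ∀ i, N i →ₗ[ℂ] ((N i).topologicalClosure) :=
    fun i => Submodule.inclusion (Submodule.le_topologicalClosure _) with hincl
  set g : (Π₀ i, N i) →ₗ[ℂ] ℂ :=
    DFinsupp.lsum ℕ fun i => (S i).toLinearMap ∘ₗ incl i with hg
  have hg_apply : ∀ c : Π₀ i, N i, g c = ∑ i ∈ c.support, S i (incl i (c i)) := by
    intro c
    simp [hg, DFinsupp.lsum_apply_apply, DFinsupp.sumAddHom_apply, DFinsupp.sum]
  have hg_bound : ∀ c : Π₀ i, N i, ‖g c‖ ≤ (K₁ * C) * ‖Φ c‖ := by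
    intro c
    rw [hg_apply]
    calc ‖∑ i ∈ c.support, S i (incl i (c i))‖
        ≤ ∑ i ∈ c.support, ‖S i (incl i (c i))‖ := norm_sum_le _ _
      _ ≤ ∑ i ∈ c.support, C * ‖(c i : E)‖ := by
          refine Finset.sum_le_sum fun i _ => ?_
          have h1 : ‖S i (incl i (c i))‖ ≤ ‖S i‖ * ‖incl i (c i)‖ :=
            (S i).le_opNorm _
          have h2 : ‖incl i (c i)‖ = ‖(c i : E)‖ := rfl
          rw [h2] at h1
          exact h1.trans (mul_le_mul_of_nonneg_right (hSC i) (norm_nonneg _))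
      _ = C * ∑ i ∈ c.support, ‖(c i : E)‖ := (Finset.mul_sum _ _ _).symm
      _ ≤ C * (K₁ * ‖Φ c‖) := mul_le_mul_of_nonneg_left (hsum_bound c) hC0
      _ = (K₁ * C) * ‖Φ c‖ := by ring
  set p : Submodule ℂ E := ⨆ i, N i with hp
  have hrange : LinearMap.range Φ = p := (Submodule.iSup_eq_range_dfinsupp_lsum N).symm
  set e : (Π₀ i, N i) ≃ₗ[ℂ] p :=
    (LinearEquiv.ofInjective Φ hΦinj).trans (LinearEquiv.ofEq _ _ hrange) with he
  have he_coe : ∀ c : Π₀ i, N i, ((e c : p) : E) = Φ c := fun c => rfl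
  have hΦ_symm : ∀ x : p, Φ (e.symm x) = (x : E) := by
    intro x
    conv_rhs => rw [← e.apply_symm_apply x]
    exact (he_coe _).symm
  set f : p →ₗ[ℂ] ℂ := g ∘ₗ (e.symm : p →ₗ[ℂ] Π₀ i, N i) with hf
  have hf_bound : ∀ x : p, ‖f x‖ ≤ (K₁ * C) * ‖x‖ := by
    intro x
    have := hg_bound (e.symm x)
    rwa [hΦ_symm x] at this
  set f' : p →L[ℂ] ℂ := f.mkContinuous (K₁ * C) hf_bound with hf'
  obtain ⟨T, hText, hTnorm⟩ := exists_extension_norm_eq p f'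
  refine ⟨T, ?_, ?_⟩
  · -- agreement on each closure
    intro α x
    -- first on the span
    have key : ∀ y : N α, T (y : E) = S α (incl α y) := by
      intro y
      have hyp : (y : E) ∈ p := (le_iSup N α) y.2
      have h1 : T ((⟨(y : E), hyp⟩ : p) : E) = f' ⟨(y : E), hyp⟩ := hText _
      have h2 : e (DFinsupp.single α y) = ⟨(y : E), hyp⟩ := by
        apply Subtype.ext
        rw [he_coe]
        simp [hΦdef, DFinsupp.lsum_apply_apply]
      have h3 : f' (⟨(y : E), hyp⟩ : p) = g (DFinsupp.single α y) := by
        rw [hf']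
        show f _ = _
        rw [hf]
        simp only [LinearMap.coe_comp, Function.comp_apply, LinearEquiv.coe_coe]
        rw [← h2, e.symm_apply_apply]
      have h4 : g (DFinsupp.single α y) = S α (incl α y) := by
        rw [hg]
        simp [DFinsupp.lsum_apply_apply]
      simpa [h3, h4] using h1
    -- now pass to the closure
    have hxcl : (x : E) ∈ closure ((N α : Set E)) := by
      rw [← Submodule.topologicalClosure_coe]
      exact x.2
    obtain ⟨u, hu, hulim⟩ := mem_closure_iff_seq_limit.mp hxcl
    set v : ℕ → ((N α).topologicalClosure) :=
      fun n => ⟨u n, Submodule.le_topologicalClosure _ (hu n)⟩ with hv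
    have hvlim : Tendsto v atTop (𝓝 x) := by
      rw [tendsto_subtype_rng]
      exact hulim
    have hTu : Tendsto (fun n => T (u n)) atTop (𝓝 (T (x : E))) :=
      (T.continuous.tendsto _).comp hulim
    have hSv : Tendsto (fun n => S α (v n)) atTop (𝓝 (S α x)) :=
      ((S α).continuous.tendsto _).comp hvlim
    have heq : (fun n => T (u n)) = fun n => S α (v n) := by
      funext n
      have := key ⟨u n, hu n⟩
      exact this
    rw [heq] at hTu
    exact tendsto_nhds_unique hTu hSv
  · rw [hTnorm]
    exact LinearMap.mkContinuous_norm_le f (mul_nonneg hK.le hC0) hf_bound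
end

section
/- Let E be a normed space over ℂ, let η be an infinite cardinal, let (L_α)_{α<η} be an ℓ¹(η)-selective base in E with constant K₁ > 0, and for each α < η pick an element a_α ∈ L_α; assume δ := inf_{α<η} ‖a_α‖ > 0. Then for every bounded function c : η → ℂ there exists a continuous linear functional T on E such that T(a_α) = c_α for every α < η, and T may be chosen with ‖T‖ ≤ K₁ · (sup_{α<η}|c_α|)/δ. -/
/-!
STATEMENT 3. Let `E` be a normed space over `ℂ`, `η` an infinite cardinal,
`(L_α)_{α<η}` an `ℓ¹(η)`-selective base in `E` with constant `K₁ > 0`, and pick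
`a_α ∈ L_α` with `δ := ⨅ α, ‖a α‖ > 0`.  Then for every bounded `c : η → ℂ` there is
`T ∈ E*` with `T (a α) = c α` for all `α` and `‖T‖ ≤ K₁ * (⨆ α, ‖c α‖) / δ`.
-/

universe u

theorem stmt3 {E : Type u} [NormedAddCommGroup E] [NormedSpace ℂ E]
    {ι : Type u} (η : Cardinal.{u}) (hη : Cardinal.aleph0 ≤ η)
    (hι : Cardinal.mk ι = η)
    (L : ι → Set E) (K₁ : ℝ) (hbase : IsSelectiveBase L K₁)
    (a : ι → E) (ha : ∀ α, a α ∈ L α)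
    (hδ : 0 < ⨅ α, ‖a α‖)
    (c : ι → ℂ) (hc : BddAbove (Set.range fun α => ‖c α‖)) :
    ∃ T : E →L[ℂ] ℂ, (∀ α, T (a α) = c α) ∧
      ‖T‖ ≤ K₁ * (⨆ α, ‖c α‖) / ⨅ α, ‖a α‖ := by
  obtain ⟨hK₁, -, -, -, hsum⟩ := hbase
  have hι' : Nonempty ι := by
    exact Cardinal.mk_ne_zero_iff.mp (hι ▸ (Cardinal.aleph0_pos.trans_le hη).ne')
  set δ := ⨅ α, ‖a α‖ with hδdef
  set M := ⨆ α, ‖c α‖ with hMdef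
  have hδle : ∀ α, δ ≤ ‖a α‖ := fun α =>
    ciInf_le ⟨0, by rintro x ⟨i, rfl⟩; exact norm_nonneg _⟩ α
  have hcle : ∀ α, ‖c α‖ ≤ M := fun α => le_ciSup hc α
  have hM0 : 0 ≤ M := le_trans (norm_nonneg _) (hcle (Classical.arbitrary ι))
  set C : ℝ := K₁ * M / δ with hCdef
  have hC0 : 0 ≤ C := div_nonneg (mul_nonneg hK₁.le hM0) hδ.le
  -- each coefficient bound: ‖c i‖ ≤ M / δ * ‖a i‖
  have hcoef : ∀ i, ‖c i‖ ≤ M / δ * ‖a i‖ := by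
    intro i
    rw [div_mul_eq_mul_div, le_div_iff₀ hδ]
    exact mul_le_mul (hcle i) (hδle i) hδ.le hM0
  -- linear independence
  have li : LinearIndependent ℂ a := by
    rw [linearIndependent_iff']
    intro s g hg i hi
    have h1 : ∑ j ∈ s, ‖g j • a j‖ ≤ K₁ * ‖∑ j ∈ s, g j • a j‖ :=
      hsum s (fun j => g j • a j) (fun j _ =>
        Submodule.smul_mem _ _ (Submodule.subset_span (ha j)))
    rw [hg, norm_zero, mul_zero] at h1
    have h2 : ‖g i • a i‖ ≤ 0 :=
      le_trans (Finset.single_le_sum (fun j _ => norm_nonneg (g j • a j)) hi) h1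
    have h3 : g i • a i = 0 := norm_le_zero_iff.mp h2
    rcases smul_eq_zero.mp h3 with h | h
    · exact h
    · exfalso
      have := hδle i
      rw [h, norm_zero] at this
      exact absurd (lt_of_lt_of_le hδ this) (lt_irrefl 0)
  set p := Submodule.span ℂ (Set.range a) with hpdef
  set B : Module.Basis ι ℂ p := Module.Basis.span li with hBdef
  set f : p →ₗ[ℂ] ℂ := B.constr ℂ c with hfdef
  -- key bound
  have key : ∀ x : p, ‖f x‖ ≤ C * ‖x‖ := by
    intro x
    set t := B.repr x with htdef
    have hfx : f x = t.sum fun i z => z • c i := B.constr_apply ℂ c x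
    have hx : (x : E) = ∑ i ∈ t.support, t i • a i := by
      conv_lhs => rw [← B.linearCombination_repr x]
      rw [Finsupp.linearCombination_apply, Finsupp.sum]
      push_cast
      refine Finset.sum_congr rfl fun i _ => ?_
      rw [htdef, hBdef, Module.Basis.span_apply]
    calc ‖f x‖ = ‖∑ i ∈ t.support, t i • c i‖ := by rw [hfx, Finsupp.sum]
      _ ≤ ∑ i ∈ t.support, ‖t i • c i‖ := norm_sum_le _ _
      _ ≤ ∑ i ∈ t.support, M / δ * ‖t i • a i‖ := by
          refine Finset.sum_le_sum fun i _ => ?_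
          rw [norm_smul, norm_smul, ← mul_assoc, mul_comm (M / δ) ‖t i‖, mul_assoc]
          exact mul_le_mul_of_nonneg_left (hcoef i) (norm_nonneg _)
      _ = M / δ * ∑ i ∈ t.support, ‖t i • a i‖ := (Finset.mul_sum _ _ _).symm
      _ ≤ M / δ * (K₁ * ‖∑ i ∈ t.support, t i • a i‖) := by
          refine mul_le_mul_of_nonneg_left ?_ (div_nonneg hM0 hδ.le)
          exact hsum t.support (fun i => t i • a i) (fun i _ =>
            Submodule.smul_mem _ _ (Submodule.subset_span (ha i)))
      _ = C * ‖(x : E)‖ := by rw [← hx]; ring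
      _ = C * ‖x‖ := rfl
  set F : p →L[ℂ] ℂ := f.mkContinuous C key with hFdef
  obtain ⟨T, hT, hTnorm⟩ := exists_extension_norm_eq p F
  refine ⟨T, fun α => ?_, ?_⟩
  · have hmem : a α ∈ p := Submodule.subset_span ⟨α, rfl⟩
    have : T (a α) = F ⟨a α, hmem⟩ := hT ⟨a α, hmem⟩
    rw [this]
    have : F ⟨a α, hmem⟩ = f ⟨a α, hmem⟩ := rfl
    rw [this]
    have hBa : (⟨a α, hmem⟩ : p) = B α := by
      apply Subtype.ext
      exact congrArg Subtype.val (Module.Basis.span_apply li α).symm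
    rw [hBa, hfdef]
    exact B.constr_basis ℂ c α
  · rw [hTnorm]
    exact le_trans (f.mkContinuous_norm_le hC0 key) (le_of_eq rfl)
end

section
/- Let A be a Banach algebra over ℂ, η an infinite cardinal, m a positive integer, and X₁, …, X_m subsets of A** each of cardinality at least η. Assume (a) A has the η-Mazur property, and (b) the η-factorization property holds: for every family (S_λ)_{λ<η} in A* with sup_λ ‖S_λ‖ < ∞ there exist a family (Ψ_{λ,k})_{λ<η, 1≤k≤m} in A** with sup_{λ,k} ‖Ψ_{λ,k}‖ < ∞ and (Ψ_{λ,1}, …, Ψ_{λ,m}) ∈ X₁ × ⋯ × X_m for each λ, and functionals T₁, …, T_m ∈ A*, such that S_λ = ∑_{k=1}^m Ψ_{λ,k}·T_k for all λ < η. Then: (1) for every weak*-closed subset 𝒮 of A** that is closed under the first Arens product □ and contains ⋃_{k=1}^m X_k, the set {Φ ∈ 𝒮 : the map Ψ ↦ Φ□Ψ from 𝒮 to 𝒮 is continuous for the weak* topology} equals 𝒮 ∩ J(A); (2) in particular, {Φ ∈ A** : the map Ψ ↦ Φ□Ψ from A** to A** is weak*–weak* continuous} = J(A), i.e. A is left strongly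 Arens irregular. -/
/-!
STATEMENT 4.  `A` a Banach algebra over `ℂ`, `η` an infinite cardinal, `m ≥ 1`,
`X₁, …, X_m ⊆ A**` each of cardinality at least `η`.  Assume `A` has the `η`-Mazur
property and `A*` has the `η`-factorization property through `X₁ × ⋯ × X_m`.  Then:
(1) for every weak*-closed subset `𝒮` of `A**` closed under the first Arens product
and containing `⋃ k, X k`, the topological centre
`{Φ ∈ 𝒮 : Ψ ↦ Φ □ Ψ is weak*-continuous on 𝒮}` equals `𝒮 ∩ J(A)`;
(2) in particular `{Φ : Ψ ↦ Φ □ Ψ weak*-weak*-continuous} = J(A)`,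
i.e. `A` is left strongly Arens irregular.
-/

noncomputable section

open ContinuousLinearMap

universe u

variable (A : Type u) [NonUnitalNormedRing A] [NormedSpace ℂ A]
  [IsScalarTower ℂ A A] [SMulCommClass ℂ A A]

/-- The continuous linear map `S ↦ (a ↦ S·a)`, where `(S·a)(b) = S (a * b)`. -/
def dActL : (A →L[ℂ] ℂ) →L[ℂ] A →L[ℂ] A →L[ℂ] ℂ :=
  (((compL ℂ A (A →L[ℂ] A) (A →L[ℂ] ℂ)).comp (compL ℂ A A ℂ)).flip)
    (ContinuousLinearMap.mul ℂ A)

/-- The module action `Φ·S` of the bidual on the dual: `(Φ·S)(a) = Φ (S·a)`. -/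
def biAct (Φ : (A →L[ℂ] ℂ) →L[ℂ] ℂ) (S : A →L[ℂ] ℂ) : A →L[ℂ] ℂ :=
  Φ.comp (dActL A S)

/-- The first Arens product on the bidual: `(Φ □ Ψ)(S) = Φ (Ψ·S)`. -/
def arens (Φ Ψ : (A →L[ℂ] ℂ) →L[ℂ] ℂ) : (A →L[ℂ] ℂ) →L[ℂ] ℂ :=
  Φ.comp ((compL ℂ A (A →L[ℂ] ℂ) ℂ Ψ).comp (dActL A))

/-- The canonical isometric embedding of `A` in its bidual. -/
def Jmap : A →L[ℂ] ((A →L[ℂ] ℂ) →L[ℂ] ℂ) := ContinuousLinearMap.apply ℂ ℂ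

/-- The weak-star topology on the bidual of `A`: the topology of pointwise
convergence on `A*`. -/
def wstar : TopologicalSpace ((A →L[ℂ] ℂ) →L[ℂ] ℂ) :=
  TopologicalSpace.induced (fun Φ => (Φ : (A →L[ℂ] ℂ) → ℂ)) inferInstance

set_option linter.unusedSectionVars false

lemma arens_apply (Φ Ψ : (A →L[ℂ] ℂ) →L[ℂ] ℂ) (S : A →L[ℂ] ℂ) :
    arens A Φ Ψ S = Φ (biAct A Ψ S) := rfl

lemma biAct_apply (Ψ : (A →L[ℂ] ℂ) →L[ℂ] ℂ) (S : A →L[ℂ] ℂ) (a : A) :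
    biAct A Ψ S a = Ψ (dActL A S a) := rfl

lemma wstar_tendsto_iff {α : Type*} {l : Filter α}
    {f : α → ((A →L[ℂ] ℂ) →L[ℂ] ℂ)} {Φ : (A →L[ℂ] ℂ) →L[ℂ] ℂ} :
    Filter.Tendsto f l (@nhds _ (wstar A) Φ) ↔
      ∀ S, Filter.Tendsto (fun d => f d S) l (nhds (Φ S)) := by
  rw [wstar, nhds_induced, Filter.tendsto_comap_iff]
  exact tendsto_pi_nhds

lemma continuous_arens_J (a : A) :
    @Continuous _ _ (wstar A) (wstar A) (fun Ψ => arens A (Jmap A a) Ψ) := by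
  rw [@continuous_iff_continuousAt _ _ (wstar A) (wstar A)]
  intro x
  show Filter.Tendsto _ _ _
  rw [wstar_tendsto_iff]
  intro S
  have := (wstar_tendsto_iff A (l := @nhds _ (wstar A) x)
    (f := fun Ψ => Ψ) (Φ := x)).1 Filter.tendsto_id (dActL A S a)
  exact this

/-- Key forward direction. -/
lemma forward {A : Type u} [NonUnitalNormedRing A] [NormedSpace ℂ A]
    [IsScalarTower ℂ A A] [SMulCommClass ℂ A A]
    (η : Cardinal.{u}) (m : ℕ)
    (X : Fin m → Set ((A →L[ℂ] ℂ) →L[ℂ] ℂ))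
    (ι : Type u) (hι : Cardinal.mk ι = η)
    (hFact : ∀ S : ι → A →L[ℂ] ℂ, (∃ C : ℝ, ∀ lam, ‖S lam‖ ≤ C) →
      ∃ (Ψ : ι → Fin m → (A →L[ℂ] ℂ) →L[ℂ] ℂ) (T : Fin m → A →L[ℂ] ℂ),
        (∃ C : ℝ, ∀ lam k, ‖Ψ lam k‖ ≤ C) ∧ (∀ lam k, Ψ lam k ∈ X k) ∧
        ∀ lam, S lam = ∑ k, biAct A (Ψ lam k) (T k))
    (𝒮 : Set ((A →L[ℂ] ℂ) →L[ℂ] ℂ))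
    (h𝒮c : @IsClosed _ (wstar A) 𝒮)
    (hX𝒮 : ∀ k, X k ⊆ 𝒮)
    (Φ : (A →L[ℂ] ℂ) →L[ℂ] ℂ)
    (hΦ : @ContinuousOn _ _ (wstar A) (wstar A) (fun Ψ => arens A Φ Ψ) 𝒮)
    (D : Type u) [Preorder D] [IsDirected D (· ≤ ·)] [Nonempty D]
    (hD : Cardinal.mk D ≤ η)
    (S : D → A →L[ℂ] ℂ) (hS1 : ∀ d, ‖S d‖ ≤ 1)
    (hS0 : ∀ a : A, Filter.Tendsto (fun d => S d a) Filter.atTop (nhds (0 : ℂ))) :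
    Filter.Tendsto (fun d => Φ (S d)) Filter.atTop (nhds (0 : ℂ)) := by
  classical
  obtain ⟨f⟩ : Nonempty (D ↪ ι) := by
    rw [← hι] at hD
    exact Cardinal.le_def _ _ |>.mp hD
  set S' : ι → A →L[ℂ] ℂ := fun lam => if h : ∃ d, f d = lam then S h.choose else 0 with hS'def
  have hS' : ∀ d, S' (f d) = S d := by
    intro d
    have h : ∃ d', f d' = f d := ⟨d, rfl⟩
    simp only [S', dif_pos h]
    congr 1
    exact f.injective h.choose_spec
  obtain ⟨Ψ, T, ⟨C, hC⟩, hmem, hsum⟩ := hFact S' ⟨1, fun lam => by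
    by_cases h : ∃ d, f d = lam
    · simp only [S', dif_pos h]; exact hS1 _
    · simp only [S', dif_neg h, norm_zero]; norm_num⟩
  rw [Filter.tendsto_iff_ultrafilter]
  intro G hG
  -- limits along the ultrafilter
  have key : ∀ k : Fin m, ∃ Ψk : (A →L[ℂ] ℂ) →L[ℂ] ℂ, Ψk ∈ 𝒮 ∧
      Filter.Tendsto (fun d => Ψ (f d) k) G (@nhds _ (wstar A) Ψk) := by
    intro k
    have hcomp := WeakDual.isCompact_closedBall (𝕜 := ℂ) (E := A →L[ℂ] ℂ) 0 C
    set g : D → WeakDual ℂ (A →L[ℂ] ℂ) := fun d => Ψ (f d) k with hg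
    have hmem' : ↑(Ultrafilter.map g G) ≤ Filter.principal
        (WeakDual.toStrongDual (𝕜 := ℂ) (E := A →L[ℂ] ℂ) ⁻¹' Metric.closedBall 0 C) := by
      rw [Filter.le_principal_iff, Ultrafilter.coe_map, Filter.mem_map]
      apply Filter.univ_mem'
      intro d
      simp only [Set.mem_preimage, Metric.mem_closedBall, dist_zero_right]
      exact (dist_zero_right (Ψ (f d) k)).trans_le (hC (f d) k)
    obtain ⟨x, _, hx⟩ := hcomp.ultrafilter_le_nhds (Ultrafilter.map g G) hmem'
    have hxlim : Filter.Tendsto (fun d => Ψ (f d) k) G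
        (@nhds _ (wstar A) (WeakDual.toStrongDual x)) := hx
    refine ⟨WeakDual.toStrongDual x, ?_, hxlim⟩
    exact @IsClosed.mem_of_tendsto _ (wstar A) _ _ _ _ _ _ h𝒮c hxlim
      (Filter.Eventually.of_forall fun d => hX𝒮 k (hmem (f d) k))
  choose Ψ' hΨ'𝒮 hΨ'lim using key
  -- the limit sums to zero
  have h0 : ∀ a : A, (∑ k, Ψ' k (dActL A (T k) a)) = 0 := by
    intro a
    have h1 : Filter.Tendsto (fun d => S d a) G (nhds (0 : ℂ)) := (hS0 a).mono_left hG
    have h2 : Filter.Tendsto (fun d => ∑ k, Ψ (f d) k (dActL A (T k) a)) G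
        (nhds (∑ k, Ψ' k (dActL A (T k) a))) := by
      apply tendsto_finset_sum
      intro k _
      exact (wstar_tendsto_iff A).1 (hΨ'lim k) (dActL A (T k) a)
    have heq : ∀ d, S d a = ∑ k, Ψ (f d) k (dActL A (T k) a) := by
      intro d
      rw [← hS' d, hsum (f d)]
      simp [biAct_apply, ContinuousLinearMap.sum_apply]
    exact tendsto_nhds_unique (h2.congr fun d => (heq d).symm) h1
  have hzero : (∑ k, biAct A (Ψ' k) (T k)) = 0 := by
    ext a
    simpa [biAct_apply, ContinuousLinearMap.sum_apply] using h0 a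
  -- continuity step
  have hlim : Filter.Tendsto (fun d => Φ (S d)) G (nhds (0 : ℂ)) := by
    have hterm : ∀ k : Fin m, Filter.Tendsto (fun d => arens A Φ (Ψ (f d) k) (T k)) G
        (nhds (arens A Φ (Ψ' k) (T k))) := by
      intro k
      have hwithin : Filter.Tendsto (fun d => Ψ (f d) k)
          G (@nhds _ (wstar A) (Ψ' k) ⊓ Filter.principal 𝒮) :=
        Filter.tendsto_inf.2 ⟨hΨ'lim k, Filter.tendsto_principal.2
          (Filter.Eventually.of_forall fun d => hX𝒮 k (hmem (f d) k))⟩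
      have hc := hΦ (Ψ' k) (hΨ'𝒮 k)
      exact (wstar_tendsto_iff A).1 (Filter.Tendsto.comp hc hwithin) (T k)
    have hsum' : Filter.Tendsto (fun d => ∑ k, arens A Φ (Ψ (f d) k) (T k)) G
        (nhds (∑ k, arens A Φ (Ψ' k) (T k))) := tendsto_finset_sum _ fun k _ => hterm k
    have hval : (∑ k, arens A Φ (Ψ' k) (T k)) = 0 := by
      have : ∑ k, arens A Φ (Ψ' k) (T k) = Φ (∑ k, biAct A (Ψ' k) (T k)) := by
        rw [map_sum]
        rfl
      rw [this, hzero, map_zero]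
    rw [hval] at hsum'
    apply hsum'.congr
    intro d
    rw [← hS' d, hsum (f d), map_sum]
    rfl
  exact hlim


theorem stmt4
    {A : Type u} [NonUnitalNormedRing A] [NormedSpace ℂ A]
    [IsScalarTower ℂ A A] [SMulCommClass ℂ A A] [CompleteSpace A]
    (η : Cardinal.{u}) (hη : Cardinal.aleph0 ≤ η)
    (m : ℕ) (hm : 0 < m)
    (X : Fin m → Set ((A →L[ℂ] ℂ) →L[ℂ] ℂ))
    (hX : ∀ k, η ≤ Cardinal.mk (X k))
    -- the `η`-Mazur property of `A`
    (hMazur : ∀ Φ : (A →L[ℂ] ℂ) →L[ℂ] ℂ,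
      (∀ (D : Type u) [Preorder D] [IsDirected D (· ≤ ·)] [Nonempty D],
        Cardinal.mk D ≤ η →
        ∀ S : D → A →L[ℂ] ℂ, (∀ d, ‖S d‖ ≤ 1) →
          (∀ a : A, Filter.Tendsto (fun d => S d a) Filter.atTop (nhds (0 : ℂ))) →
          Filter.Tendsto (fun d => Φ (S d)) Filter.atTop (nhds (0 : ℂ))) →
      Φ ∈ Set.range fun a : A => Jmap A a)
    -- the `η`-factorization property of `A*` through `X₁ × ⋯ × X_m`
    (ι : Type u) (hι : Cardinal.mk ι = η)
    (hFact : ∀ S : ι → A →L[ℂ] ℂ, (∃ C : ℝ, ∀ lam, ‖S lam‖ ≤ C) →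
      ∃ (Ψ : ι → Fin m → (A →L[ℂ] ℂ) →L[ℂ] ℂ) (T : Fin m → A →L[ℂ] ℂ),
        (∃ C : ℝ, ∀ lam k, ‖Ψ lam k‖ ≤ C) ∧ (∀ lam k, Ψ lam k ∈ X k) ∧
        ∀ lam, S lam = ∑ k, biAct A (Ψ lam k) (T k)) :
    (∀ 𝒮 : Set ((A →L[ℂ] ℂ) →L[ℂ] ℂ),
        @IsClosed _ (wstar A) 𝒮 →
        (∀ Φ ∈ 𝒮, ∀ Ψ ∈ 𝒮, arens A Φ Ψ ∈ 𝒮) →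
        (∀ k, X k ⊆ 𝒮) →
        {Φ | Φ ∈ 𝒮 ∧
            @ContinuousOn _ _ (wstar A) (wstar A) (fun Ψ => arens A Φ Ψ) 𝒮}
          = 𝒮 ∩ Set.range fun a : A => Jmap A a)
    ∧ {Φ : (A →L[ℂ] ℂ) →L[ℂ] ℂ |
          @Continuous _ _ (wstar A) (wstar A) fun Ψ => arens A Φ Ψ}
        = Set.range fun a : A => Jmap A a := by

  have part1 : ∀ 𝒮 : Set ((A →L[ℂ] ℂ) →L[ℂ] ℂ),
      @IsClosed _ (wstar A) 𝒮 →
      (∀ Φ ∈ 𝒮, ∀ Ψ ∈ 𝒮, arens A Φ Ψ ∈ 𝒮) →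
      (∀ k, X k ⊆ 𝒮) →
      {Φ | Φ ∈ 𝒮 ∧
          @ContinuousOn _ _ (wstar A) (wstar A) (fun Ψ => arens A Φ Ψ) 𝒮}
        = 𝒮 ∩ Set.range fun a : A => Jmap A a := by
    intro 𝒮 h𝒮c _h𝒮mul hX𝒮
    ext Φ
    simp only [Set.mem_setOf_eq, Set.mem_inter_iff]
    constructor
    · rintro ⟨hΦ𝒮, hΦc⟩
      refine ⟨hΦ𝒮, hMazur Φ ?_⟩
      intro D _ _ _ hD S hS1 hS0
      exact forward η m X ι hι hFact 𝒮 h𝒮c hX𝒮 Φ hΦc D hD S hS1 hS0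
    · rintro ⟨hΦ𝒮, a, rfl⟩
      exact ⟨hΦ𝒮, @Continuous.continuousOn _ _ (wstar A) (wstar A) _ _
        (continuous_arens_J A a)⟩
  refine ⟨part1, ?_⟩
  have h2 := part1 Set.univ (@isClosed_univ _ (wstar A)) (fun _ _ _ _ => trivial)
    (fun k => Set.subset_univ _)
  ext Φ
  simp only [Set.mem_setOf_eq]
  constructor
  · intro hc
    have hmem : Φ ∈ Set.univ ∩ Set.range fun a : A => Jmap A a := by
      rw [← h2]
      exact ⟨trivial,
        (@continuousOn_univ _ _ (wstar A) (wstar A) _).2 hc⟩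
    exact hmem.2
  · rintro ⟨a, rfl⟩
    exact continuous_arens_J A a
end
end

section
/- Let A be a Banach algebra over ℂ with a bounded approximate identity, let η be an infinite cardinal and m a positive integer, and let ((A_α)_{α<η}, (R_α^k)_{α<η, 1≤k≤m}) be an Fℓ¹(η)-base of type 3 in A (types 1 and 2 being the special cases with m = 1). Let (I_λ)_{λ<η} be pairwise disjoint cofinal subsets of η and let (p_λ)_{λ<η} be cofinal ultrafilters on η with I_λ ∈ p_λ for each λ < η. Then for every family (S_λ)_{λ<η} in A* with sup_λ ‖S_λ‖ < ∞ there exist functionals T₁, …, T_m ∈ A* such that for every λ < η and every a ∈ A, the function α ↦ ∑_{k=1}^m T_k(R_α^k(a)) converges along the ultrafilter p_λ to S_λ(a). (This expresses that A* has the uniform η-factorization property: S_λ = ∑_{k=1}^m Ψ_{λ,k}·T_k, where Ψ_{λ,k} ∈ A** is the weak*-limit of the base multipliers along p_λ, and these limits are chosen independently of the family (S_λ).) -/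
/-!
STATEMENT 6.  `A` a Banach algebra over `ℂ` with a bounded approximate identity,
equipped with an `Fℓ¹(η)`-base of type 3 (`m` right multipliers `R α k` per index,
types 1 and 2 are the special case `m = 1`).  Given pairwise disjoint cofinal subsets
`I λ` of `η` and cofinal ultrafilters `p λ` with `I λ ∈ p λ`, for every uniformly
bounded family `(S λ)_{λ<η}` in `A*` there are `T₁, …, T_m ∈ A*` such that for each
`λ` and `a ∈ A` the function `α ↦ ∑ k, T k (R α k a)` converges along `p λ` to
`S λ a`.  (This is the uniform `η`-factorization property of `A*`:
`S λ = ∑ k, Ψ_{λ,k} · T k` with `Ψ_{λ,k}` the weak*-limit of the base multipliers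
along `p λ`, chosen independently of the family `(S λ)`.)

Indices `α < η` are represented by the canonical well-ordered type
`(Cardinal.ord η).toType` of order type `η`.
-/

noncomputable section

universe u

/-- `A` has a bounded approximate identity: a proper filter (the eventuality filter
of a bounded net) carrying a bounded set, along which `a * x → a` and `x * a → a`
for every `a ∈ A`. -/
def HasBAI (A : Type u) [NonUnitalNormedRing A] : Prop :=
  ∃ F : Filter A, F.NeBot ∧ (∃ C : ℝ, ∀ᶠ x in F, ‖x‖ ≤ C) ∧
    ∀ a : A, Filter.Tendsto (fun x => a * x) F (nhds a) ∧
      Filter.Tendsto (fun x => x * a) F (nhds a)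

lemma auxExtend {ι : Type*} {A : Type*} [NormedAddCommGroup A] [NormedSpace ℂ A]
    {m : ℕ} (hm : 0 < m)
    (Aset : ι → Set A) (R : ι → Fin m → A →L[ℂ] A)
    (K₁ K₂ CS : ℝ) (hK₁0 : 0 ≤ K₁) (hK₂ : 0 ≤ K₂) (hCS0 : 0 ≤ CS)
    (hsel : ∀ (s : Finset ι) (x : ι → A),
      (∀ α ∈ s, x α ∈ Submodule.span ℂ {y : A | ∃ a ∈ Aset α, ∃ k, y = R α k a}) →
      ∑ α ∈ s, ‖x α‖ ≤ K₁ * ‖∑ α ∈ s, x α‖)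
    (hnorm : ∀ α, ∀ a ∈ Submodule.span ℂ (Aset α), ‖a‖ ≤ K₂ * ⨆ k, ‖R α k a‖)
    (S' : ι → (A →L[ℂ] ℂ)) (hCS : ∀ α, ‖S' α‖ ≤ CS) :
    ∃ G : (Fin m → A) →L[ℂ] ℂ,
      ∀ α, ∀ a ∈ Submodule.span ℂ (Aset α), G (fun k => R α k a) = S' α a := by
  classical
  haveI : Nonempty (Fin m) := ⟨⟨0, hm⟩⟩
  set Γ : ι → A →ₗ[ℂ] (Fin m → A) := fun α => LinearMap.pi fun k => (R α k).toLinearMap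
    with hΓdef
  set U : ι → Submodule ℂ (Fin m → A) := fun α => (Submodule.span ℂ (Aset α)).map (Γ α)
    with hUdef
  -- coordinates of elements of `U α` lie in the span of `L α`
  have hUk : ∀ α (w : Fin m → A), w ∈ U α → ∀ k,
      w k ∈ Submodule.span ℂ {y : A | ∃ a ∈ Aset α, ∃ k, y = R α k a} := by
    rintro α w ⟨a, ha, rfl⟩ k
    have h1 : R α k a ∈ Submodule.map ((R α k).toLinearMap) (Submodule.span ℂ (Aset α)) :=
      Submodule.mem_map_of_mem ha
    rw [Submodule.map_span] at h1
    refine Submodule.span_mono ?_ h1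
    rintro y ⟨b, hb, rfl⟩
    exact ⟨b, hb, k, rfl⟩
  have hnorm' : ∀ α, ∀ a ∈ Submodule.span ℂ (Aset α), ‖a‖ ≤ K₂ * ∑ k, ‖R α k a‖ := by
    intro α a ha
    refine (hnorm α a ha).trans (mul_le_mul_of_nonneg_left ?_ hK₂)
    exact ciSup_le fun k => Finset.single_le_sum (f := fun j => ‖R α j a‖)
      (fun j _ => norm_nonneg _) (Finset.mem_univ k)
  have hinj0 : ∀ α (a : A), a ∈ Submodule.span ℂ (Aset α) → Γ α a = 0 → a = 0 := by
    intro α a ha h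
    have hk : ∀ k, R α k a = 0 := fun k => congrFun h k
    have hsup : (⨆ k, ‖R α k a‖) = 0 := by simp [hk]
    have h2 := hnorm α a ha
    rw [hsup, mul_zero] at h2
    exact norm_le_zero_iff.1 h2
  set mα : ∀ α, Submodule.span ℂ (Aset α) →ₗ[ℂ] U α :=
    fun α => (Γ α).restrict (fun x hx => Submodule.mem_map_of_mem hx) with hmαdef
  have hmα_coe : ∀ α (x : Submodule.span ℂ (Aset α)), ((mα α x : Fin m → A)) = Γ α x :=
    fun α x => rfl
  have hbij : ∀ α, Function.Bijective (mα α) := by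
    intro α
    constructor
    · intro x y hxy
      have h1 : Γ α ((x : A) - y) = 0 := by
        have h2 : (Γ α) (x : A) = Γ α (y : A) := congrArg Subtype.val hxy
        rw [map_sub, h2, sub_self]
      have h3 := hinj0 α _ (Submodule.sub_mem _ x.2 y.2) h1
      exact Subtype.ext (sub_eq_zero.1 h3)
    · rintro ⟨w, a, ha, rfl⟩
      exact ⟨⟨a, ha⟩, rfl⟩
  set e : ∀ α, (Submodule.span ℂ (Aset α)) ≃ₗ[ℂ] U α :=
    fun α => LinearEquiv.ofBijective (mα α) (hbij α) with hedef
  set g : ∀ α, U α →ₗ[ℂ] ℂ := fun α =>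
    (S' α).toLinearMap ∘ₗ (Submodule.span ℂ (Aset α)).subtype ∘ₗ ((e α).symm.toLinearMap)
    with hgdef
  set Φ : (Π₀ α, U α) →ₗ[ℂ] (Fin m → A) :=
    DFinsupp.lsum ℕ (fun α => (U α).subtype) with hΦdef
  set G0 : (Π₀ α, U α) →ₗ[ℂ] ℂ := DFinsupp.lsum ℕ g with hG0def
  have hΦapp : ∀ d : Π₀ α, U α, Φ d = ∑ α ∈ d.support, ((d α : Fin m → A)) := by
    intro d
    rw [hΦdef]
    rw [DFinsupp.lsum_apply_apply, DFinsupp.sumAddHom_apply]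
    rfl
  have hG0app : ∀ d : Π₀ α, U α, G0 d = ∑ α ∈ d.support, g α (d α) := by
    intro d
    rw [hG0def]
    rw [DFinsupp.lsum_apply_apply, DFinsupp.sumAddHom_apply]
    rfl
  -- the coordinates of d α are `R α k (aα)` with aα := (e α).symm (d α)
  have hcoord : ∀ α (u : U α),
      (u : Fin m → A) = fun k => R α k (((e α).symm u : A)) := by
    intro α u
    have h1 : e α ((e α).symm u) = u := (e α).apply_symm_apply u
    have h2 : ((e α ((e α).symm u) : U α) : Fin m → A) = Γ α (((e α).symm u : A)) := rfl
    rw [h1] at h2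
    rw [h2]
    rfl
  have hgval : ∀ α (u : U α), g α u = S' α (((e α).symm u : A)) := fun α u => rfl
  -- uniform estimate
  have key : ∀ d : Π₀ α, U α, ‖G0 d‖ ≤ (CS * K₂ * K₁ * m) * ‖Φ d‖ := by
    intro d
    have hk1 : ∀ k : Fin m, ∑ α ∈ d.support, ‖(d α : Fin m → A) k‖ ≤ K₁ * ‖Φ d‖ := by
      intro k
      have h1 := hsel d.support (fun α => (d α : Fin m → A) k)
        (fun α _ => hUk α _ (d α).2 k)
      refine h1.trans ?_
      have h2 : ∑ α ∈ d.support, (d α : Fin m → A) k = Φ d k := by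
        rw [hΦapp, Finset.sum_apply]
      rw [h2]
      have h3 : ‖Φ d k‖ ≤ ‖Φ d‖ := norm_le_pi_norm (Φ d) k
      exact mul_le_mul_of_nonneg_left h3 hK₁0
    calc ‖G0 d‖ = ‖∑ α ∈ d.support, g α (d α)‖ := by rw [hG0app]
      _ ≤ ∑ α ∈ d.support, ‖g α (d α)‖ := norm_sum_le _ _
      _ ≤ ∑ α ∈ d.support, CS * (K₂ * ∑ k, ‖(d α : Fin m → A) k‖) := by
          refine Finset.sum_le_sum fun α _ => ?_
          rw [hgval]
          set aα := (((e α).symm (d α) : A)) with haαdef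
          have haspan : aα ∈ Submodule.span ℂ (Aset α) := ((e α).symm (d α)).2
          have h4 : ‖S' α aα‖ ≤ CS * ‖aα‖ :=
            le_trans ((S' α).le_opNorm aα) (mul_le_mul_of_nonneg_right (hCS α) (norm_nonneg _))
          refine h4.trans (mul_le_mul_of_nonneg_left ?_ hCS0)
          have h5 := hnorm' α aα haspan
          refine h5.trans (le_of_eq ?_)
          congr 1
          refine Finset.sum_congr rfl fun k _ => ?_
          rw [hcoord α (d α)]
      _ = (CS * K₂) * ∑ α ∈ d.support, ∑ k, ‖(d α : Fin m → A) k‖ := by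
          rw [Finset.mul_sum]; ring_nf
      _ = (CS * K₂) * ∑ k : Fin m, ∑ α ∈ d.support, ‖(d α : Fin m → A) k‖ := by
          rw [Finset.sum_comm]
      _ ≤ (CS * K₂) * ∑ k : Fin m, K₁ * ‖Φ d‖ := by
          refine mul_le_mul_of_nonneg_left (Finset.sum_le_sum fun k _ => hk1 k)
            (mul_nonneg hCS0 hK₂)
      _ = (CS * K₂ * K₁ * m) * ‖Φ d‖ := by
          rw [Finset.sum_const, Finset.card_univ, Fintype.card_fin]
          push_cast
          ring_nf
  have hΦinj : Function.Injective Φ := by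
    have h0 : ∀ d, Φ d = 0 → d = 0 := by
      intro d hd
      refine DFinsupp.ext fun α => ?_
      by_cases hα : α ∈ d.support
      · have hz : ∀ k : Fin m, (d α : Fin m → A) k = 0 := by
          intro k
          have h1 := hsel d.support (fun β => (d β : Fin m → A) k)
            (fun β _ => hUk β _ (d β).2 k)
          have h2 : ∑ β ∈ d.support, (d β : Fin m → A) k = Φ d k := by
            rw [hΦapp, Finset.sum_apply]
          rw [h2, hd] at h1
          simp only [Pi.zero_apply, norm_zero, mul_zero] at h1
          have h3 : ∀ β ∈ d.support, ‖(d β : Fin m → A) k‖ = 0 := by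
            intro β hβ
            have := (Finset.sum_eq_zero_iff_of_nonneg
              (fun β _ => norm_nonneg ((d β : Fin m → A) k))).1 (le_antisymm h1
                (Finset.sum_nonneg fun β _ => norm_nonneg _)) β hβ
            exact this
          exact norm_eq_zero.1 (h3 α hα)
        have hza : (d α : Fin m → A) = 0 := funext hz
        exact Subtype.ext (by simp [hza])
      · exact DFinsupp.notMem_support_iff.1 hα
    intro d1 d2 h12
    have h13 : Φ (d1 - d2) = 0 := by
      have h14 := LinearMap.map_sub Φ d1 d2
      rw [h14, h12, sub_self]
    exact sub_eq_zero.1 (h0 _ h13)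
  set W : Submodule ℂ (Fin m → A) := LinearMap.range Φ with hWdef
  set eΦ : (Π₀ α, U α) ≃ₗ[ℂ] W := LinearEquiv.ofInjective Φ hΦinj with heΦdef
  have heΦcoe : ∀ d, ((eΦ d : W) : Fin m → A) = Φ d := by
    intro d
    rw [heΦdef]
    rfl
  set F : W →ₗ[ℂ] ℂ := G0 ∘ₗ eΦ.symm.toLinearMap with hFdef
  have hFbound : ∀ w : W, ‖F w‖ ≤ (CS * K₂ * K₁ * m) * ‖w‖ := by
    intro w
    have h1 : Φ (eΦ.symm w) = (w : Fin m → A) := by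
      rw [← heΦcoe, eΦ.apply_symm_apply]
    have h2 := key (eΦ.symm w)
    rw [h1] at h2
    exact h2
  set Fc : W →L[ℂ] ℂ := F.mkContinuous _ hFbound with hFcdef
  obtain ⟨G, hGext, -⟩ := exists_extension_norm_eq W Fc
  refine ⟨G, ?_⟩
  intro α a ha
  have hmem : (fun k => R α k a) ∈ W := by
    refine ⟨DFinsupp.single α (mα α ⟨a, ha⟩), ?_⟩
    rw [hΦdef, DFinsupp.lsum_single]
    rfl
  have hG1 : G (fun k => R α k a) = Fc ⟨_, hmem⟩ := hGext ⟨_, hmem⟩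
  rw [hG1]
  have h2 : eΦ.symm ⟨(fun k => R α k a), hmem⟩ = DFinsupp.single α (mα α ⟨a, ha⟩) := by
    apply eΦ.injective
    rw [eΦ.apply_symm_apply]
    apply Subtype.ext
    rw [heΦcoe, hΦdef, DFinsupp.lsum_single]
    rfl
  have h3 : Fc ⟨(fun k => R α k a), hmem⟩ = G0 (eΦ.symm ⟨(fun k => R α k a), hmem⟩) := rfl
  rw [h3, h2, hG0def, DFinsupp.lsum_single, hgval]
  have h4 : (e α).symm (mα α ⟨a, ha⟩) = ⟨a, ha⟩ := by
    have h5 : e α ⟨a, ha⟩ = mα α ⟨a, ha⟩ := rfl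
    rw [← h5, (e α).symm_apply_apply]
  rw [h4]

theorem stmt6
    {A : Type u} [NonUnitalNormedRing A] [NormedSpace ℂ A]
    [IsScalarTower ℂ A A] [SMulCommClass ℂ A A] [CompleteSpace A]
    (hbai : HasBAI A)
    (η : Cardinal.{u}) (hη : Cardinal.aleph0 ≤ η)
    (m : ℕ) (hm : 0 < m)
    -- the `Fℓ¹(η)`-base of type 3:
    (Aset : (Cardinal.ord η).ToType → Set A)
    (R : (Cardinal.ord η).ToType → Fin m → A →L[ℂ] A)
    (hmono : ∀ α β, α ≤ β → Aset α ⊆ Aset β)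
    (hball : ∀ α, ∀ a ∈ Aset α, ‖a‖ ≤ 1)
    (hspan : (Submodule.span ℂ (⋃ α, Aset α)).topologicalClosure = ⊤)
    (hRmul : ∀ α k (a b : A), R α k (a * b) = a * R α k b)
    (hRbdd : ∃ C : ℝ, ∀ α k, ‖R α k‖ ≤ C)
    (K₁ : ℝ) (hK₁ : 0 < K₁)
    (hLne : ∀ α, {x : A | ∃ a ∈ Aset α, ∃ k, x = R α k a}.Nonempty)
    (hLbdd : ∃ C : ℝ, ∀ α, ∀ x ∈ {x : A | ∃ a ∈ Aset α, ∃ k, x = R α k a}, ‖x‖ ≤ C)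
    (hLdisj : ∀ α β, α ≠ β →
      Submodule.span ℂ {x : A | ∃ a ∈ Aset α, ∃ k, x = R α k a} ⊓
        Submodule.span ℂ {x : A | ∃ a ∈ Aset β, ∃ k, x = R β k a} = ⊥)
    (hsel : ∀ (s : Finset ((Cardinal.ord η).ToType)) (x : (Cardinal.ord η).ToType → A),
      (∀ α ∈ s, x α ∈ Submodule.span ℂ {y : A | ∃ a ∈ Aset α, ∃ k, y = R α k a}) →
      ∑ α ∈ s, ‖x α‖ ≤ K₁ * ‖∑ α ∈ s, x α‖)
    (hdisjk : ∀ (k : Fin m) α β, α ≠ β →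
      Submodule.span ℂ (R α k '' Aset α) ⊓ Submodule.span ℂ (R β k '' Aset β) = ⊥)
    (K₂ : ℝ) (hK₂ : 0 < K₂)
    (hnorm : ∀ α, ∀ a ∈ Submodule.span ℂ (Aset α), ‖a‖ ≤ K₂ * ⨆ k, ‖R α k a‖)
    -- the pairwise disjoint cofinal sets and the cofinal ultrafilters:
    (I : (Cardinal.ord η).ToType → Set ((Cardinal.ord η).ToType))
    (hIdisj : ∀ lam mu, lam ≠ mu → Disjoint (I lam) (I mu))
    (hIcof : ∀ lam α, ∃ β ∈ I lam, α ≤ β)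
    (p : (Cardinal.ord η).ToType → Ultrafilter ((Cardinal.ord η).ToType))
    (hpcof : ∀ lam, ∀ s ∈ p lam, ∀ α, ∃ β ∈ s, α ≤ β)
    (hIp : ∀ lam, I lam ∈ p lam) :
    ∀ S : (Cardinal.ord η).ToType → (A →L[ℂ] ℂ), (∃ C : ℝ, ∀ lam, ‖S lam‖ ≤ C) →
      ∃ T : Fin m → (A →L[ℂ] ℂ),
        ∀ lam (a : A),
          Filter.Tendsto (fun α => ∑ k, T k (R α k a))
            (p lam : Filter ((Cardinal.ord η).ToType)) (nhds (S lam a)) := by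
  classical
  intro S hS
  obtain ⟨CS, hCS⟩ := hS
  obtain ⟨CR, hCR⟩ := hRbdd
  haveI hne : Nonempty ((Cardinal.ord η).ToType) := by
    rw [Ordinal.toType_nonempty_iff_ne_zero]
    intro h
    have h1 : η ≠ 0 := fun h2 => Cardinal.aleph0_ne_zero (le_antisymm (h2 ▸ hη) (zero_le))
    exact h1 (by rw [← Cardinal.card_ord η, h, Ordinal.card_zero])
  have hCS0 : 0 ≤ CS := le_trans (norm_nonneg _) (hCS (Classical.arbitrary _))
  have hCR0 : 0 ≤ CR := le_trans (norm_nonneg _)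
    (hCR (Classical.arbitrary _) ⟨0, hm⟩)
  -- the labelling function
  set lamOf : (Cardinal.ord η).ToType → (Cardinal.ord η).ToType :=
    fun α => if h : ∃ μ, α ∈ I μ then h.choose else Classical.arbitrary _
    with hlamdef
  have hlam : ∀ lam α, α ∈ I lam → lamOf α = lam := by
    intro lam α hα
    have hex : ∃ μ, α ∈ I μ := ⟨lam, hα⟩
    rw [hlamdef]
    simp only [hex, dif_pos]
    by_contra hne'
    exact Set.disjoint_left.1 (hIdisj _ _ hne') hex.choose_spec hα
  -- the Hahn-Banach extension
  obtain ⟨G, hG⟩ := auxExtend hm Aset R K₁ K₂ CS hK₁.le hK₂.le hCS0 hsel hnorm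
    (fun α => S (lamOf α)) (fun α => hCS _)
  -- the coordinate inclusions
  have hsingle_bound : ∀ (k : Fin m) (x : A), ‖(LinearMap.single ℂ (fun _ : Fin m => A) k) x‖ ≤ 1 * ‖x‖ := by
    intro k x
    rw [one_mul]
    refine (pi_norm_le_iff_of_nonneg (norm_nonneg x)).2 (fun j => ?_)
    rcases eq_or_ne j k with rfl | hj
    · rw [LinearMap.coe_single, Pi.single_eq_same]
    · rw [LinearMap.coe_single, Pi.single_eq_of_ne hj, norm_zero]
      exact norm_nonneg x
  set T : Fin m → (A →L[ℂ] ℂ) := fun k =>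
    G.comp ((LinearMap.single ℂ (fun _ : Fin m => A) k).mkContinuous 1 (hsingle_bound k))
    with hTdef
  have hTapp : ∀ k (x : A), T k x = G (Pi.single k x) := by
    intro k x
    rw [hTdef]
    simp only [ContinuousLinearMap.comp_apply, LinearMap.mkContinuous_apply,
      LinearMap.coe_single]
  have keyT : ∀ α, ∀ a ∈ Submodule.span ℂ (Aset α),
      ∑ k, T k (R α k a) = S (lamOf α) a := by
    intro α a ha
    have h1 : ∑ k, T k (R α k a) = G (∑ k, Pi.single k (R α k a)) := by
      rw [map_sum]
      exact Finset.sum_congr rfl fun k _ => hTapp k (R α k a)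
    rw [h1, Finset.univ_sum_single (fun k => R α k a)]
    exact hG α a ha
  refine ⟨T, ?_⟩
  intro lam a
  have hbound : ∀ α (x : A), ‖∑ k, T k (R α k x)‖ ≤ (∑ k, ‖T k‖) * CR * ‖x‖ := by
    intro α x
    calc ‖∑ k, T k (R α k x)‖ ≤ ∑ k, ‖T k (R α k x)‖ := norm_sum_le _ _
      _ ≤ ∑ k : Fin m, ‖T k‖ * (CR * ‖x‖) := by
          refine Finset.sum_le_sum fun k _ => ?_
          refine le_trans ((T k).le_opNorm _) (mul_le_mul_of_nonneg_left ?_ (norm_nonneg _))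
          exact le_trans ((R α k).le_opNorm x)
            (mul_le_mul_of_nonneg_right (hCR α k) (norm_nonneg x))
      _ = (∑ k, ‖T k‖) * CR * ‖x‖ := by rw [← Finset.sum_mul, mul_assoc]
  set M : ℝ := (∑ k, ‖T k‖) * CR + CS + 1 with hMdef
  have hM1 : (∑ k, ‖T k‖) * CR + CS ≤ M - 1 := by rw [hMdef]; ring_nf; exact le_refl _
  have hM0 : 0 < M := by
    have h1 : 0 ≤ (∑ k, ‖T k‖) * CR :=
      mul_nonneg (Finset.sum_nonneg fun k _ => norm_nonneg _) hCR0
    rw [hMdef]; linarith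
  rw [Metric.tendsto_nhds]
  intro ε hε
  -- density: find d in some span (Aset α₀) close to a
  have hcl : a ∈ closure ((Submodule.span ℂ (⋃ α, Aset α) : Submodule ℂ A) : Set A) := by
    rw [← Submodule.topologicalClosure_coe, hspan]
    trivial
  obtain ⟨d, hd_mem, hd_close⟩ := Metric.mem_closure_iff.1 hcl (ε / M) (div_pos hε hM0)
  have hd_mem' : d ∈ Submodule.span ℂ (⋃ α, Aset α) := hd_mem
  rw [Submodule.span_iUnion] at hd_mem'
  have hdir : Directed (· ≤ ·) (fun α => Submodule.span ℂ (Aset α)) := by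
    refine Monotone.directed_le fun α β hab => Submodule.span_mono (hmono α β hab)
  obtain ⟨α₀, hd0⟩ := (Submodule.mem_iSup_of_directed _ hdir).1 hd_mem'
  have hup : {α : (Cardinal.ord η).ToType | α₀ ≤ α} ∈ p lam := by
    by_contra hno
    have hc : {α : (Cardinal.ord η).ToType | α₀ ≤ α}ᶜ ∈ p lam := Ultrafilter.compl_mem_iff_notMem.2 hno
    obtain ⟨β, hβ1, hβ2⟩ := hpcof lam _ hc α₀
    exact hβ1 hβ2
  have hmemE : (I lam ∩ {α : (Cardinal.ord η).ToType | α₀ ≤ α}) ∈ p lam := Filter.inter_mem (hIp lam) hup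
  refine Filter.mem_of_superset hmemE ?_
  rintro α ⟨hα1, hα2⟩
  have hdα : d ∈ Submodule.span ℂ (Aset α) := Submodule.span_mono (hmono _ _ hα2) hd0
  have hTd : ∑ k, T k (R α k d) = S lam d := by
    rw [keyT α d hdα, hlam lam α hα1]
  have hsplit : ∑ k, T k (R α k a) - S lam a
      = (∑ k, T k (R α k (a - d))) + S lam (d - a) := by
    have h1 : ∀ k, R α k (a - d) = R α k a - R α k d := fun k => map_sub _ _ _
    have h2 : ∑ k, T k (R α k (a - d)) = ∑ k, T k (R α k a) - ∑ k, T k (R α k d) := by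
      rw [← Finset.sum_sub_distrib]
      refine Finset.sum_congr rfl fun k _ => ?_
      rw [h1 k, map_sub]
    rw [h2, hTd, map_sub]
    ring
  have hdist : dist (∑ k, T k (R α k a)) (S lam a) < ε := by
    rw [dist_eq_norm, hsplit]
    have h3 : ‖(∑ k, T k (R α k (a - d))) + S lam (d - a)‖
        ≤ (∑ k, ‖T k‖) * CR * ‖a - d‖ + CS * ‖d - a‖ := by
      refine le_trans (norm_add_le _ _) (add_le_add (hbound α (a - d)) ?_)
      exact le_trans ((S lam).le_opNorm _)
        (mul_le_mul_of_nonneg_right (hCS lam) (norm_nonneg _))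
    have h4 : ‖d - a‖ = ‖a - d‖ := norm_sub_rev d a
    have h5 : ‖a - d‖ < ε / M := by rw [← dist_eq_norm]; exact hd_close
    have h6 : ((∑ k, ‖T k‖) * CR + CS) * ‖a - d‖ ≤ (M - 1) * ‖a - d‖ :=
      mul_le_mul_of_nonneg_right hM1 (norm_nonneg _)
    have h7 : (M - 1) * ‖a - d‖ < ε := by
      have h8 : (M - 1) * ‖a - d‖ ≤ (M - 1) * (ε / M) := by
        refine mul_le_mul_of_nonneg_left h5.le ?_
        have : 0 ≤ (∑ k, ‖T k‖) * CR + CS := by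
          have h1 : 0 ≤ (∑ k, ‖T k‖) * CR :=
            mul_nonneg (Finset.sum_nonneg fun k _ => norm_nonneg _) hCR0
          linarith
        linarith [hM1]
      have h9 : (M - 1) * (ε / M) < ε := by
        rw [div_eq_inv_mul]
        have hMlt : M - 1 < M := by linarith
        calc (M - 1) * (M⁻¹ * ε) < M * (M⁻¹ * ε) := by
              refine mul_lt_mul_of_pos_right hMlt ?_
              positivity
          _ = ε := by field_simp
      exact lt_of_le_of_lt h8 h9
    calc ‖(∑ k, T k (R α k (a - d))) + S lam (d - a)‖
        ≤ (∑ k, ‖T k‖) * CR * ‖a - d‖ + CS * ‖d - a‖ := h3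
      _ = ((∑ k, ‖T k‖) * CR + CS) * ‖a - d‖ := by rw [h4]; ring
      _ ≤ (M - 1) * ‖a - d‖ := h6
      _ < ε := h7
  exact hdist
end
end

section
/- Let G be an infinite discrete semigroup of cardinality η that is weakly cancellative, let (s_β)_{β<η} be an enumeration (bijection) of G by the cardinal η, and for each α < η set G_α = {s_β : β < α}. Then there exists a function x : η → G such that the sets G_α·x_α (α < η) are pairwise disjoint: (G_α·x_α) ∩ (G_β·x_β) = ∅ whenever α ≠ β. -/
/-!
STATEMENT 11.  `G` an infinite discrete weakly cancellative semigroup of cardinality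
`η`, enumerated by a bijection `s : η ≃ G`; set `G_α = {s_β : β < α}`.  Then there is
`x : η → G` with the sets `G_α · x_α` pairwise disjoint.

Indices `α < η` are represented by the canonical well-ordered type
`(Cardinal.ord η).toType` of order type `η`.
-/

universe u

/-- A union of fewer-than-`#G` finite sets cannot cover `G` (for `G` infinite). -/
lemma small_union_lt {G : Type u} [Infinite G] {ι : Type u} (f : ι → Set G)
    (hι : Cardinal.mk ι < Cardinal.mk G) (hf : ∀ i, (f i).Finite) :
    Cardinal.mk ↥(⋃ i, f i) < Cardinal.mk G := by
  by_cases h : Cardinal.mk ι < Cardinal.aleph0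
  · have : Finite ι := Cardinal.lt_aleph0_iff_finite.mp h
    have hfin : (⋃ i, f i).Finite := Set.finite_iUnion hf
    exact lt_of_lt_of_le hfin.lt_aleph0 (Cardinal.aleph0_le_mk G)
  · push_neg at h
    have h1 : Cardinal.mk ↥(⋃ i, f i) ≤ Cardinal.mk ι * Cardinal.aleph0 := by
      refine le_trans (Cardinal.mk_iUnion_le f) ?_
      refine mul_le_mul_right (ciSup_le' fun i => ?_) _
      exact le_of_lt (hf i).lt_aleph0
    have h2 : Cardinal.mk ι * Cardinal.aleph0 = Cardinal.mk ι :=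
      Cardinal.mul_eq_left h (le_refl _ |>.trans h) Cardinal.aleph0_ne_zero
    calc Cardinal.mk ↥(⋃ i, f i) ≤ Cardinal.mk ι := h2 ▸ h1
      _ < Cardinal.mk G := hι

theorem stmt11 {G : Type u} [Semigroup G] [Infinite G]
    (η : Cardinal.{u}) (hcard : Cardinal.mk G = η)
    (hwc : ∀ s t : G, {u : G | s * u = t}.Finite ∧ {u : G | u * s = t}.Finite)
    (s : (Cardinal.ord η).ToType ≃ G) :
    ∃ x : (Cardinal.ord η).ToType → G,
      ∀ α β, α ≠ β →
        Disjoint ((fun g => g * x α) '' (s '' Set.Iio α))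
          ((fun g => g * x β) '' (s '' Set.Iio β)) := by
  subst hcard
  let O := (Cardinal.ord (Cardinal.mk G)).ToType
  -- key step: at each stage we can choose a new value avoiding all collisions
  have key : ∀ (α : O) (IH : ∀ β, β < α → G), ∃ t : G,
      ∀ (β : O) (hβ : β < α) (γ : O), γ < α → ∀ (δ : O), δ < α →
        s γ * t ≠ s δ * IH β hβ := by
    intro α IH
    set I := ({β : O // β < α} × {γ : O // γ < α} × {δ : O // δ < α}) with hI
    set F : I → Set G := fun p => {t : G | s p.2.1.1 * t = s p.2.2.1 * IH p.1.1 p.1.2}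
      with hF
    have hIcard : Cardinal.mk I < Cardinal.mk G := by
      have h1 : Cardinal.mk {β : O // β < α} < Cardinal.mk G := by
        exact Cardinal.mk_Iio_toType_ord_lt α
      have hG : Cardinal.aleph0 ≤ Cardinal.mk G := Cardinal.aleph0_le_mk G
      have := Cardinal.mul_lt_of_lt hG h1 (Cardinal.mul_lt_of_lt hG h1 h1)
      simpa [hI, Cardinal.mk_prod, Cardinal.lift_id] using this
    have hfin : ∀ p : I, (F p).Finite := fun p => (hwc _ _).1
    have hlt : Cardinal.mk ↥(⋃ p, F p) < Cardinal.mk G := small_union_lt F hIcard hfin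
    have hne : (⋃ p, F p) ≠ Set.univ := by
      intro h
      rw [h] at hlt
      simp [Cardinal.mk_univ] at hlt
    obtain ⟨t, ht⟩ := Set.ne_univ_iff_exists_notMem _ |>.mp hne
    refine ⟨t, fun β hβ γ hγ δ hδ heq => ht ?_⟩
    exact Set.mem_iUnion.mpr ⟨⟨⟨β, hβ⟩, ⟨γ, hγ⟩, ⟨δ, hδ⟩⟩, heq⟩
  -- construct x by transfinite recursion
  let x : O → G := WellFounded.fix wellFounded_lt (fun α IH => (key α IH).choose)
  have hx : ∀ α : O, x α = (key α (fun β _ => x β)).choose := fun α =>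
    WellFounded.fix_eq _ _ α
  have spec : ∀ (α β : O), β < α → ∀ (γ : O), γ < α → ∀ (δ : O), δ < α →
      s γ * x α ≠ s δ * x β := by
    intro α β hβ γ hγ δ hδ
    have := (key α (fun β _ => x β)).choose_spec β hβ γ hγ δ hδ
    rwa [← hx α] at this
  refine ⟨x, fun α β hne => ?_⟩
  have main : ∀ α β : O, β < α →
      Disjoint ((fun g => g * x α) '' (s '' Set.Iio α))
        ((fun g => g * x β) '' (s '' Set.Iio β)) := by
    intro α β hβ
    rw [Set.disjoint_left]
    rintro a ⟨-, ⟨γ, hγ, rfl⟩, rfl⟩ ⟨-, ⟨δ, hδ, rfl⟩, h⟩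
    exact spec α β hβ γ hγ δ (hδ.trans hβ) h.symm
  rcases lt_or_gt_of_ne hne with h | h
  · exact (main β α h).symm
  · exact main α β h
end

section
/- Let G be an infinite discrete semigroup of cardinality η that is weakly cancellative and right cancellative. Then the set of non-principal ultrafilters x ∈ βG ∖ G that are right cancellable in βG — that is, such that for all p, q ∈ βG, p·x = q·x implies p = q — has cardinality at least 2^(2^η). -/
/-!
STATEMENT 12.  `G` an infinite discrete semigroup of cardinality `η`, weakly
cancellative and right cancellative.  In `βG` (the space of ultrafilters on `G` with
the Stone topology and the extended multiplication `A ∈ p·q ↔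
{s | {t | s·t ∈ A} ∈ q} ∈ p`), the set of non-principal ultrafilters `x` that are
right cancellable (i.e. `p·x = q·x → p = q`) has cardinality at least `2 ^ (2 ^ η)`.
-/

universe u

/-- The extension to `βG` of the multiplication of a discrete semigroup `G`:
`A ∈ umul p q ↔ {s | {t | s * t ∈ A} ∈ q} ∈ p`. -/
def umul {G : Type*} [Semigroup G] (p q : Ultrafilter G) : Ultrafilter G :=
  p.bind fun s => q.map fun t => s * t

open Cardinal Set

namespace Stmt12Aux


lemma mem_umul {G : Type u} [Semigroup G] {p q : Ultrafilter G} {B : Set G} :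
    B ∈ umul p q ↔ {s | {t | s * t ∈ B} ∈ q} ∈ p := by
  change B ∈ Filter.bind (↑p) (fun s => ↑(q.map fun t => s * t)) ↔ _
  rw [Filter.mem_bind']
  rfl

/-- disjointness criterion for right cancelability -/
theorem cancel_of_disjoint {G : Type u} [Semigroup G] (x : Ultrafilter G) (C : G → Set G)
    (hdisj : ∀ s u : G, s ≠ u → ∀ z, z ∈ C s → z ∈ C u → False)
    (hmem : ∀ s : G, {t | s * t ∈ C s} ∈ x) :
    ∀ p q : Ultrafilter G, umul p x = umul q x → p = q := by
  intro p q h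
  by_contra hne
  obtain ⟨B, hBp, hBq⟩ : ∃ B, B ∈ p ∧ B ∉ q := by
    by_contra hc
    push_neg at hc
    exact hne (Ultrafilter.eq_of_le fun B hB => hc B hB).symm
  have h1 : (⋃ s ∈ B, C s) ∈ umul p x := by
    refine mem_umul.2 (p.mem_of_superset hBp fun s hs => ?_)
    exact Filter.mem_of_superset (hmem s) fun t ht => Set.mem_biUnion hs ht
  have h2 : (⋃ s ∈ Bᶜ, C s) ∈ umul q x := by
    refine mem_umul.2 (q.mem_of_superset ((Ultrafilter.compl_mem_iff_notMem).2 hBq)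
      fun s hs => ?_)
    exact Filter.mem_of_superset (hmem s) fun t ht => Set.mem_biUnion hs ht
  rw [h] at h1
  obtain ⟨z, hz1, hz2⟩ := Filter.nonempty_of_mem (Filter.inter_mem h1 h2 :
    _ ∈ (umul q x : Filter G))
  obtain ⟨s, hs, hzs⟩ := Set.mem_iUnion₂.1 hz1
  obtain ⟨u, hu, hzu⟩ := Set.mem_iUnion₂.1 hz2
  exact hdisj s u (fun e => hu (e ▸ hs)) z hzs hzu



/-- a union of finitely-many-each sets over a small index type is small -/
lemma mk_iUnion_lt {G : Type u} [Infinite G] {T : Type u} (hT : #T < #G)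
    (f : T → Set G) (hf : ∀ z, (f z).Finite) : #(⋃ z, f z) < #G := by
  rcases finite_or_infinite T with hfin | hinf
  · exact lt_of_lt_of_le (Set.finite_iUnion hf).lt_aleph0 (aleph0_le_mk G)
  · calc #(⋃ z, f z) ≤ #T * ⨆ z, #(f z) := mk_iUnion_le f
      _ ≤ #T * ℵ₀ := mul_le_mul_right (ciSup_le' fun z => (hf z).lt_aleph0.le) _
      _ = #T := by
          rw [Cardinal.mul_eq_max (Cardinal.infinite_iff.1 hinf) le_rfl,
            max_eq_left (Cardinal.infinite_iff.1 hinf)]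
      _ < #G := hT

/-- Construction of the strongly discrete sequence. -/
lemma exists_seq {G : Type u} [Semigroup G] [Infinite G] {ι : Type u} [LinearOrder ι]
    [WellFoundedLT ι]
    (hwc : ∀ s t : G, {u : G | s * u = t}.Finite)
    (idx : G → ι) (hidx : Function.Injective idx)
    (hIic : ∀ i : ι, #(Iic i) < #G) :
    ∃ a : ι → G, Function.Injective a ∧
      ∀ i j (s u : G), j < i → idx s ≤ i → idx u ≤ i → s * a i ≠ u * a j := by
  classical
  have wf : WellFounded ((· < ·) : ι → ι → Prop) := wellFounded_lt
  -- the "bad set" at stage i, given previous choices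
  have hex : ∀ (i : ι) (rec : ∀ j, j < i → G), ∃ g : G,
      ∀ j (h : j < i), g ≠ rec j h ∧
        ∀ s u : G, idx s ≤ i → idx u ≤ i → s * g ≠ u * rec j h := by
    intro i rec
    set T : Type u := ↥(Iio i) × ↥{s : G | idx s ≤ i} × ↥{s : G | idx s ≤ i} with hT
    have hTcard : #T < #G := by
      have hIio : #(Iio i) < #G := lt_of_le_of_lt (mk_le_mk_of_subset Iio_subset_Iic_self) (hIic i)
      have hSi : #{s : G | idx s ≤ i} < #G := by
        refine lt_of_le_of_lt (mk_le_of_injective (f := fun s : {s : G | idx s ≤ i} =>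
          (⟨idx s.1, s.2⟩ : Iic i)) ?_) (hIic i)
        intro s t h
        exact Subtype.ext (hidx (by simpa using congrArg Subtype.val h))
      have h0 : ℵ₀ ≤ #G := aleph0_le_mk G
      calc #T = #(Iio i) * (#{s : G | idx s ≤ i} * #{s : G | idx s ≤ i}) := by
            simp [hT, Cardinal.mk_prod]
        _ < #G := Cardinal.mul_lt_of_lt h0 hIio (Cardinal.mul_lt_of_lt h0 hSi hSi)
    set Bad : Set G := {g | ∃ j, ∃ h : j < i, g = rec j h} ∪
      ⋃ z : T, {g | z.2.1.1 * g = z.2.2.1 * rec z.1.1 z.1.2} with hBad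
    have hBadcard : #Bad < #G := by
      refine lt_of_le_of_lt (mk_union_le _ _) (Cardinal.add_lt_of_lt (aleph0_le_mk G) ?_ ?_)
      · refine lt_of_le_of_lt ?_ (lt_of_le_of_lt (mk_le_mk_of_subset
          Iio_subset_Iic_self) (hIic i))
        have : {g | ∃ j, ∃ h : j < i, g = rec j h} ⊆
            Set.range fun j : Iio i => rec j.1 j.2 := by
          rintro g ⟨j, h, rfl⟩; exact ⟨⟨j, h⟩, rfl⟩
        exact (mk_le_mk_of_subset this).trans mk_range_le
      · exact mk_iUnion_lt hTcard _ fun z => hwc _ _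
    have : Bad ≠ Set.univ := by
      intro h
      rw [h, mk_univ] at hBadcard
      exact lt_irrefl _ hBadcard
    obtain ⟨g, hg⟩ := Set.ne_univ_iff_exists_notMem _ |>.1 this
    refine ⟨g, fun j h => ⟨?_, ?_⟩⟩
    · intro hEq
      exact hg (Or.inl ⟨j, h, hEq⟩)
    · intro s u hs hu hEq
      refine hg (Or.inr (Set.mem_iUnion.2 ⟨(⟨j, h⟩, ⟨s, hs⟩, ⟨u, hu⟩), hEq⟩))
  set F : ∀ i : ι, (∀ j, j < i → G) → G := fun i rec => Classical.choose (hex i rec) with hF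
  set a : ι → G := wf.fix F with haDef
  have ha : ∀ i, a i = F i fun j _ => a j := fun i => wf.fix_eq F i
  have hspec : ∀ i j (h : j < i), a i ≠ a j ∧
      ∀ s u : G, idx s ≤ i → idx u ≤ i → s * a i ≠ u * a j := by
    intro i j h
    rw [ha i]
    exact Classical.choose_spec (hex i fun j _ => a j) j h
  refine ⟨a, ?_, fun i j s u h hs hu => (hspec i j h).2 s u hs hu⟩
  intro i j hEq
  rcases lt_trichotomy i j with h | h | h
  · exact absurd hEq.symm (hspec j i h).1
  · exact h
  · exact absurd hEq (hspec i j h).1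



lemma mk_finset_biUnion_lt {ι β : Type u} [Infinite ι] (F : Finset β) (f : β → Set ι)
    (hf : ∀ d ∈ F, #(f d) < #ι) : #(⋃ d ∈ F, f d) < #ι := by
  classical
  induction F using Finset.induction_on with
  | empty => simpa using aleph0_pos.trans_le (aleph0_le_mk ι)
  | @insert a F ha ih =>
      rw [Finset.set_biUnion_insert]
      refine lt_of_le_of_lt (mk_union_le _ _) (Cardinal.add_lt_of_lt (aleph0_le_mk ι)
        (hf a (Finset.mem_insert_self a F)) (ih fun d hd => hf d (Finset.mem_insert_of_mem hd)))

theorem count_tail_ultrafilters {ι : Type u} [LinearOrder ι] [Infinite ι]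
    (hsm : ∀ i : ι, #(Iio i) < #ι) :
    (2 : Cardinal.{u}) ^ ((2 : Cardinal.{u}) ^ #ι) ≤
      #{y : Ultrafilter ι // ∀ i : ι, Set.Ici i ∈ y} := by
  classical
  obtain ⟨q⟩ : Nonempty ((Finset ι × Finset (Finset ι)) ≃ ι) := by
    rw [← Cardinal.eq, Cardinal.mk_prod, Cardinal.lift_id, Cardinal.lift_id,
      Cardinal.mk_finset_of_infinite, Cardinal.mk_finset_of_infinite,
      Cardinal.mk_finset_of_infinite, Cardinal.mul_eq_self (aleph0_le_mk ι)]
  set A : Set ι → Set ι := fun X => {i | (q.symm i).1.filter (· ∈ X) ∈ (q.symm i).2} with hA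
  -- the key combinatorial lemma : finite boolean combinations avoid small sets
  have key : ∀ 𝒳 𝒴 : Finset (Set ι), (∀ X ∈ 𝒳, ∀ Y ∈ 𝒴, X ≠ Y) →
      ∀ W : Set ι, #W < #ι →
      ∃ i : ι, (∀ X ∈ 𝒳, i ∈ A X) ∧ (∀ Y ∈ 𝒴, i ∉ A Y) ∧ i ∉ W := by
    intro 𝒳 𝒴 hXY W hW
    set pt : Set ι × Set ι → ι := fun pr => Classical.epsilon fun z => ¬(z ∈ pr.1 ↔ z ∈ pr.2)
      with hptDef
    set F0 : Finset ι := (𝒳 ×ˢ 𝒴).image pt with hF0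
    have hpt : ∀ X ∈ 𝒳, ∀ Y ∈ 𝒴, pt (X, Y) ∈ F0 ∧ ¬(pt (X, Y) ∈ X ↔ pt (X, Y) ∈ Y) := by
      intro X hX Y hY
      refine ⟨Finset.mem_image_of_mem _ (Finset.mem_product.2 ⟨hX, hY⟩), ?_⟩
      refine Classical.epsilon_spec (p := fun z => ¬(z ∈ X ↔ z ∈ Y)) ?_
      have hne := hXY X hX Y hY
      by_contra hc
      exact hne (Set.ext fun z => not_not.1 fun hz => hc ⟨z, hz⟩)
    set emb : ι → ι := fun i0 =>
      q (insert i0 F0, 𝒳.image fun X => (insert i0 F0).filter (· ∈ X)) with hembDef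
    have hgood : ∀ i0 : ι, (∀ X ∈ 𝒳, emb i0 ∈ A X) ∧ ∀ Y ∈ 𝒴, emb i0 ∉ A Y := by
      intro i0
      have hq : q.symm (emb i0) =
          (insert i0 F0, 𝒳.image fun X => (insert i0 F0).filter (· ∈ X)) :=
        Equiv.symm_apply_apply _ _
      constructor
      · intro X hX
        show _ ∈ _
        rw [hA]
        simp only [Set.mem_setOf_eq, hq]
        exact Finset.mem_image_of_mem _ hX
      · intro Y hY hmem
        rw [hA] at hmem
        simp only [Set.mem_setOf_eq, hq] at hmem
        obtain ⟨X, hX, hfil⟩ := Finset.mem_image.1 hmem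
        have hz := (hpt X hX Y hY)
        have hzF : pt (X, Y) ∈ insert i0 F0 := Finset.mem_insert_of_mem hz.1
        have := Finset.ext_iff.1 hfil (pt (X, Y))
        simp only [Finset.mem_filter, hzF, true_and] at this
        exact hz.2 this
    -- find i0 outside F0 with emb i0 ∉ W
    set V : Set ι := {i : ι | i ∉ F0} with hV
    have hinj : Set.InjOn emb V := by
      intro i0 h0 i1 h1 hEq
      have := q.injective hEq
      have h' : insert i0 F0 = insert i1 F0 := congrArg Prod.fst this
      have : i0 ∈ insert i1 F0 := h' ▸ Finset.mem_insert_self i0 F0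
      rcases Finset.mem_insert.1 this with h | h
      · exact h
      · exact absurd h h0
    have hbig : ∃ i0 ∈ V, emb i0 ∉ W := by
      by_contra hc
      push_neg at hc
      have hsub : emb '' V ⊆ W := by
        rintro _ ⟨i0, h0, rfl⟩; exact hc i0 h0
      have h1 : #V = #ι := by
        have hVc : V = (↑F0 : Set ι)ᶜ := rfl
        rw [hVc]
        refine Cardinal.mk_compl_of_infinite _ ?_
        exact lt_of_lt_of_le (F0.finite_toSet.lt_aleph0) (aleph0_le_mk ι)
      have := (Cardinal.mk_image_eq_of_injOn _ _ hinj).symm.trans_le (mk_le_mk_of_subset hsub)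
      rw [h1] at this
      exact absurd (this.trans_lt hW) (lt_irrefl _)
    obtain ⟨i0, _, hi0W⟩ := hbig
    exact ⟨emb i0, (hgood i0).1, (hgood i0).2, hi0W⟩
  -- for each S, an ultrafilter containing the right sets
  have hU : ∀ S : Set (Set ι), ∃ y : Ultrafilter ι,
      (∀ X ∈ S, A X ∈ y) ∧ (∀ X ∉ S, (A X)ᶜ ∈ y) ∧ ∀ i : ι, Set.Ici i ∈ y := by
    intro S
    set 𝒮 : Set (Set ι) := (A '' S) ∪ ((fun X => (A X)ᶜ) '' Sᶜ) ∪ Set.range Set.Ici with h𝒮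
    have cond : ∀ T : Finset (Set ι), (↑T : Set (Set ι)) ⊆ 𝒮 →
        (⋂₀ (↑T : Set (Set ι))).Nonempty := ?_
    · obtain ⟨y, hy⟩ := Ultrafilter.exists_ultrafilter_of_finite_inter_nonempty 𝒮 cond
      exact ⟨y, fun X hX => hy (Or.inl (Or.inl ⟨X, hX, rfl⟩)),
        fun X hX => hy (Or.inl (Or.inr ⟨X, hX, rfl⟩)),
        fun i => hy (Or.inr ⟨i, rfl⟩)⟩
    intro T hT
    set g1 : Set ι → Set ι := fun d => Classical.epsilon fun X => X ∈ S ∧ A X = d with hg1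
    set g2 : Set ι → Set ι := fun d => Classical.epsilon fun X => X ∉ S ∧ (A X)ᶜ = d with hg2
    set g3 : Set ι → ι := fun d => Classical.epsilon fun i => Set.Ici i = d with hg3
    set P1 : Set ι → Prop := fun d => ∃ X, X ∈ S ∧ A X = d with hP1
    set P2 : Set ι → Prop := fun d => ∃ X, X ∉ S ∧ (A X)ᶜ = d with hP2
    set P3 : Set ι → Prop := fun d => ∃ i, Set.Ici i = d with hP3
    set 𝒳 : Finset (Set ι) := (T.filter P1).image g1 with h𝒳
    set 𝒴 : Finset (Set ι) := (T.filter P2).image g2 with h𝒴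
    set W : Set ι := ⋃ d ∈ T.filter P3, Set.Iio (g3 d) with hW
    have h𝒳S : ∀ X ∈ 𝒳, X ∈ S ∧ ∃ d ∈ T, A X = d := by
      intro X hX
      obtain ⟨d, hd, rfl⟩ := Finset.mem_image.1 hX
      obtain ⟨hdT, hPd⟩ := Finset.mem_filter.1 hd
      have := Classical.epsilon_spec hPd
      exact ⟨this.1, d, hdT, this.2⟩
    have h𝒴S : ∀ Y ∈ 𝒴, Y ∉ S := by
      intro Y hY
      obtain ⟨d, hd, rfl⟩ := Finset.mem_image.1 hY
      exact (Classical.epsilon_spec (Finset.mem_filter.1 hd).2).1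
    obtain ⟨i, hi1, hi2, hi3⟩ := key 𝒳 𝒴
      (fun X hX Y hY e => h𝒴S Y hY (e ▸ (h𝒳S X hX).1)) W
      (mk_finset_biUnion_lt _ _ fun d _ => hsm _)
    refine ⟨i, fun d hd => ?_⟩
    have hd' : d ∈ T := hd
    rcases hT hd' with (⟨X, hX, rfl⟩ | ⟨X, hX, rfl⟩) | ⟨j, rfl⟩
    · -- d = A X with X ∈ S
      have hPd : P1 (A X) := ⟨X, hX, rfl⟩
      have hg1d : g1 (A X) ∈ 𝒳 :=
        Finset.mem_image_of_mem _ (Finset.mem_filter.2 ⟨hd', hPd⟩)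
      have hspec := Classical.epsilon_spec hPd
      have := hi1 _ hg1d
      rwa [hspec.2] at this
    · -- d = (A X)ᶜ with X ∉ S
      have hPd : P2 ((A X)ᶜ) := ⟨X, hX, rfl⟩
      have hg2d : g2 ((A X)ᶜ) ∈ 𝒴 :=
        Finset.mem_image_of_mem _ (Finset.mem_filter.2 ⟨hd', hPd⟩)
      have hspec := Classical.epsilon_spec hPd
      have := hi2 _ hg2d
      show i ∈ (A X)ᶜ
      rw [← hspec.2]
      exact this
    · -- d = Ici j
      have hPd : P3 (Set.Ici j) := ⟨j, rfl⟩
      have hspec := Classical.epsilon_spec hPd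
      have hnot : i ∉ Set.Iio (g3 (Set.Ici j)) := fun h =>
        hi3 (Set.mem_biUnion (Finset.mem_filter.2 ⟨hd', hPd⟩) h)
      have : g3 (Set.Ici j) ≤ i := not_lt.1 hnot
      rw [← hspec]
      exact this
  choose y hy1 hy2 hy3 using hU
  have hyinj : Function.Injective y := by
    intro S S' hEq
    by_contra hne
    obtain ⟨X, hX⟩ : ∃ X, ¬(X ∈ S ↔ X ∈ S') := by
      by_contra hc; push_neg at hc
      exact hne (Set.ext fun X => not_not.1 fun h => h (hc X))
    rcases Classical.em (X ∈ S) with h | h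
    · have h' : X ∉ S' := fun h'' => hX ⟨fun _ => h'', fun _ => h⟩
      have := hy2 S' X h'
      rw [← hEq] at this
      exact (Ultrafilter.compl_mem_iff_notMem.1 this) (hy1 S X h)
    · have h' : X ∈ S' := by
        by_contra h''
        exact hX ⟨fun hh => absurd hh h, fun hh => absurd hh h''⟩
      have := hy2 S X h
      rw [hEq] at this
      exact (Ultrafilter.compl_mem_iff_notMem.1 this) (hy1 S' X h')
  refine le_trans (le_of_eq ?_) (Cardinal.mk_le_of_injective
    (f := fun S : Set (Set ι) =>
      (⟨y S, hy3 S⟩ : {y : Ultrafilter ι // ∀ i : ι, Set.Ici i ∈ y})) ?_)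
  · rw [Cardinal.mk_set, Cardinal.mk_set]
  · intro S S' h
    exact hyinj (congrArg Subtype.val h)

theorem main_count {G : Type u} [Semigroup G] [Infinite G]
    (hwc : ∀ s t : G, {u : G | s * u = t}.Finite ∧ {u : G | u * s = t}.Finite)
    (hrc : ∀ u v s : G, u * s = v * s → u = v)
    {ι : Type u} [LinearOrder ι] [WellFoundedLT ι] [Infinite ι]
    (e : ι ≃ G)
    (hsm : ∀ i : ι, #(Iio i) < #ι)
    (hIic : ∀ i : ι, #(Iic i) < #G) :
    (2 : Cardinal.{u}) ^ ((2 : Cardinal.{u}) ^ #G) ≤ Cardinal.mk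
      {x : Ultrafilter G // x ∉ Set.range (pure : G → Ultrafilter G) ∧
        ∀ p q : Ultrafilter G, umul p x = umul q x → p = q} := by
  classical
  have hι : #ι = #G := Cardinal.mk_congr e
  obtain ⟨a, hainj, hP⟩ := exists_seq (fun s t => (hwc s t).1) e.symm e.symm.injective hIic
  have hnomax : ∀ j : ι, ∃ i : ι, j < i := by
    intro j
    by_contra hc
    push_neg at hc
    have h1 : (univ : Set ι) ⊆ Iic j := fun i _ => hc i
    have h2 := mk_le_mk_of_subset h1
    rw [mk_univ, hι] at h2
    exact absurd (h2.trans_lt (hIic j)) (lt_irrefl _)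
  have main : ∀ y : Ultrafilter ι, (∀ i : ι, Set.Ici i ∈ y) →
      (Ultrafilter.map a y ∉ Set.range (pure : G → Ultrafilter G) ∧
        ∀ p q : Ultrafilter G,
          umul p (Ultrafilter.map a y) = umul q (Ultrafilter.map a y) → p = q) := by
    intro y hy
    have htail : ∀ i : ι, a '' Set.Ici i ∈ Ultrafilter.map a y := by
      intro i
      rw [Ultrafilter.mem_map]
      exact Filter.mem_of_superset (hy i) (Set.subset_preimage_image a _)
    constructor
    · rintro ⟨g, hg⟩
      have hmem : ∀ i : ι, g ∈ a '' Set.Ici i := by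
        intro i
        have h3 := htail i
        rw [← hg] at h3
        exact Ultrafilter.mem_pure.1 h3
      obtain ⟨j, hj, hja⟩ := hmem (Classical.arbitrary ι)
      obtain ⟨i, hi⟩ := hnomax j
      obtain ⟨j', hj', hj'a⟩ := hmem i
      have hjj : j' = j := hainj (hj'a.trans hja.symm)
      rw [hjj] at hj'
      exact absurd (lt_of_lt_of_le hi hj') (lt_irrefl _)
    · refine cancel_of_disjoint _
        (fun s => (fun t => s * t) '' (a '' Set.Ici (e.symm s))) ?_ ?_
      · rintro s u hsu z ⟨t1, ⟨i, hi, rfl⟩, rfl⟩ ⟨t2, ⟨j, hj, rfl⟩, hEq⟩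
        -- hEq : u * a j = s * a i
        rcases lt_trichotomy i j with h | h | h
        · exact hP j i u s h hj (hi.trans h.le) hEq
        · rw [← h] at hEq
          exact hsu (hrc s u (a i) hEq.symm)
        · exact hP i j s u h hi (hj.trans h.le) hEq.symm
      · intro s
        refine Filter.mem_of_superset (htail (e.symm s)) ?_
        rintro t ⟨i, hi, rfl⟩
        exact ⟨a i, ⟨i, hi, rfl⟩, rfl⟩
  refine le_trans ?_ (Cardinal.mk_le_of_injective
    (f := fun yy : {y : Ultrafilter ι // ∀ i : ι, Set.Ici i ∈ y} =>
      (⟨Ultrafilter.map a yy.1, main yy.1 yy.2⟩ :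
        {x : Ultrafilter G // x ∉ Set.range (pure : G → Ultrafilter G) ∧
          ∀ p q : Ultrafilter G, umul p x = umul q x → p = q})) ?_)
  · have h4 := count_tail_ultrafilters hsm
    rwa [hι] at h4
  · intro y1 y2 h
    have h' : Ultrafilter.map a y1.1 = Ultrafilter.map a y2.1 := congrArg Subtype.val h
    refine Subtype.ext (Ultrafilter.coe_injective ?_)
    have h5 := congrArg Ultrafilter.toFilter h'
    rw [Ultrafilter.coe_map, Ultrafilter.coe_map] at h5
    exact Filter.map_injective hainj h5

end Stmt12Aux

theorem stmt12 {G : Type u} [Semigroup G] [Infinite G]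
    (hwc : ∀ s t : G, {u : G | s * u = t}.Finite ∧ {u : G | u * s = t}.Finite)
    (hrc : ∀ u v s : G, u * s = v * s → u = v)
    (η : Cardinal.{u}) (hcard : Cardinal.mk G = η) :
    (2 : Cardinal.{u}) ^ ((2 : Cardinal.{u}) ^ η) ≤ Cardinal.mk
      {x : Ultrafilter G // x ∉ Set.range (pure : G → Ultrafilter G) ∧
        ∀ p q : Ultrafilter G, umul p x = umul q x → p = q} := by
  classical
  subst hcard
  have hι : #((Cardinal.mk G).ord.ToType) = #G := by
    rw [Cardinal.mk_toType, Cardinal.card_ord]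
  haveI : Infinite ((Cardinal.mk G).ord.ToType) := by
    rw [Cardinal.infinite_iff, hι]; exact aleph0_le_mk G
  obtain ⟨e⟩ : Nonempty ((Cardinal.mk G).ord.ToType ≃ G) := Cardinal.eq.1 hι
  have hsm : ∀ i : (Cardinal.mk G).ord.ToType, #(Iio i) < #((Cardinal.mk G).ord.ToType) :=
    fun i => lt_of_lt_of_le (Cardinal.mk_Iio_ord_toType i) hι.symm.le
  have hIic : ∀ i : (Cardinal.mk G).ord.ToType, #(Iic i) < #G := by
    intro i
    rw [← Set.Iio_insert]
    refine lt_of_le_of_lt Cardinal.mk_insert_le (Cardinal.add_lt_of_lt (aleph0_le_mk G)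
      (Cardinal.mk_Iio_ord_toType i) (one_lt_aleph0.trans_le (aleph0_le_mk G)))
  exact Stmt12Aux.main_count hwc hrc e hsm hIic
end

section
/- Let G be an infinite discrete semigroup that is weakly cancellative and right cancellative. Then the topological centre of βG is G: for an ultrafilter p ∈ βG, the map q ↦ p·q from βG to βG is continuous if and only if p is principal, i.e. p = pure s for some s ∈ G. -/
/-!
STATEMENT 14.  `G` an infinite discrete semigroup, weakly cancellative and right
cancellative.  The topological centre of `βG` is `G`: for `p ∈ βG`, the map
`q ↦ p · q` is continuous (for the Stone topology on `βG`) iff `p` is principal.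
-/

universe u

set_option linter.unusedSectionVars false

open Set Cardinal

theorem mem_umul {G : Type u} [Semigroup G] {p q : Ultrafilter G} {A : Set G} :
    A ∈ umul p q ↔ {s : G | {t : G | s * t ∈ A} ∈ q} ∈ p := Iff.rfl

namespace Stmt14Aux

variable {G : Type u} [Semigroup G] [Infinite G] {I : Type u} [LinearOrder I]

/-- Products of all blocks below stage `i`. -/
def blocks (c : I → Finset G) (t : I → G) (i : I) : Set G :=
  {x | ∃ j, j < i ∧ ∃ v ∈ c j, x = v * t j}

/-- The shadow produced by pairs of stages below `i`. -/
def sh (c : I → Finset G) (t : I → G) (i : I) : Set G :=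
  {u | ∃ m, m < i ∧ ∃ j, j < i ∧ m ≠ j ∧ ∃ v ∈ c j, u * t m = v * t j}

/-- New shadow contributions at stage `i` if the value `tt` is chosen there. -/
def nsh (c : I → Finset G) (t : I → G) (i : I) (tt : G) : Set G :=
  {u | (∃ m, m < i ∧ ∃ v ∈ c i, u * t m = v * tt) ∨ u * tt ∈ blocks c t i}

/-- Choices at stage `i` that would hurt a protected set `Y`. -/
def badSet (c : I → Finset G) (t : I → G) (i : I) (Y : Set G) : Set G :=
  {tt | ∃ u ∈ Y, u ∈ nsh c t i tt}

/-- The global shadow of a full system. -/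
def SH (c : I → Finset G) (t : I → G) : Set G :=
  {u | ∃ m j, m ≠ j ∧ ∃ v ∈ c j, u * t m = v * t j}

section congr

variable {c : I → Finset G} {t t' : I → G} {i : I}

theorem blocks_congr (h : ∀ j, j < i → t j = t' j) : blocks c t i = blocks c t' i := by
  ext x
  constructor <;> rintro ⟨j, hj, v, hv, he⟩ <;> refine ⟨j, hj, v, hv, ?_⟩
  · rw [← h j hj]; exact he
  · rw [h j hj]; exact he

theorem sh_congr (h : ∀ j, j < i → t j = t' j) : sh c t i = sh c t' i := by
  ext u
  constructor <;> rintro ⟨m, hm, j, hj, hmj, v, hv, he⟩ <;>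
    refine ⟨m, hm, j, hj, hmj, v, hv, ?_⟩
  · rw [← h m hm, ← h j hj]; exact he
  · rw [h m hm, h j hj]; exact he

theorem nsh_congr (h : ∀ j, j < i → t j = t' j) (tt : G) : nsh c t i tt = nsh c t' i tt := by
  unfold nsh
  rw [blocks_congr h]
  ext u
  constructor <;> rintro (⟨m, hm, v, hv, he⟩ | hb)
  · exact Or.inl ⟨m, hm, v, hv, by rw [← h m hm]; exact he⟩
  · exact Or.inr hb
  · exact Or.inl ⟨m, hm, v, hv, by rw [h m hm]; exact he⟩
  · exact Or.inr hb

theorem badSet_congr (h : ∀ j, j < i → t j = t' j) (Y : Set G) :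
    badSet c t i Y = badSet c t' i Y := by
  unfold badSet
  ext tt
  simp only [Set.mem_setOf_eq, nsh_congr h]

end congr



theorem small_finite {Y : Set G} (h : Y.Finite) : #Y < #G :=
  h.lt_aleph0.trans_le (Cardinal.aleph0_le_mk G)

theorem small_union {Y Z : Set G} (hY : #Y < #G) (hZ : #Z < #G) : #(Y ∪ Z : Set G) < #G :=
  (Cardinal.mk_union_le Y Z).trans_lt
    (Cardinal.add_lt_of_lt (Cardinal.aleph0_le_mk G) hY hZ)

theorem small_biUnion {ι : Type u} {S : Set ι} (hS : #S < #G) {f : ι → Set G}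
    (hf : ∀ x, (f x).Finite) : #(⋃ x ∈ S, f x) < #G := by
  rcases lt_or_ge (#S) ℵ₀ with h | h
  · have hSf : S.Finite := Cardinal.lt_aleph0_iff_set_finite.mp h
    exact small_finite (hSf.biUnion fun x _ => hf x)
  · have hne : Nonempty S := by
      rw [← Cardinal.mk_ne_zero_iff]
      intro h0
      rw [h0] at h
      exact (Cardinal.aleph0_ne_zero (le_zero_iff.mp h))
    have h1 : #(⋃ x ∈ S, f x) ≤ #S * ⨆ x : S, #(f x) := Cardinal.mk_biUnion_le f S
    have h2 : (⨆ x : S, #(f x.1)) ≤ ℵ₀ := ciSup_le' fun x => (hf x.1).lt_aleph0.le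
    have h3 : #S * (⨆ x : S, #(f x.1)) ≤ #S * ℵ₀ := mul_le_mul_right h2 _
    have h4 : #S * ℵ₀ = #S := by
      rw [Cardinal.mul_eq_max h (le_refl _)]
      exact max_eq_left h
    calc #(⋃ x ∈ S, f x) ≤ #S * ⨆ x : S, #(f x) := h1
      _ ≤ #S * ℵ₀ := h3
      _ = #S := h4
      _ < #G := hS

theorem small_prod {α β : Type u} {Y : Set α} {Z : Set β} (hY : #Y < #G) (hZ : #Z < #G) :
    #(Y ×ˢ Z : Set (α × β)) < #G := by
  have e := Cardinal.mk_congr (Equiv.Set.prod Y Z)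
  rw [e]
  rw [Cardinal.mk_prod, Cardinal.lift_id, Cardinal.lift_id]
  exact Cardinal.mul_lt_of_lt (Cardinal.aleph0_le_mk G) hY hZ


section small

variable (hwc : ∀ s t : G, {u : G | s * u = t}.Finite ∧ {u : G | u * s = t}.Finite)
variable {c : I → Finset G} (hseg : ∀ i : I, #(Set.Iio i) < #G)

include hwc hseg

theorem blocks_small (t : I → G) (i : I) : #(blocks c t i) < #G := by
  have hsub : blocks c t i ⊆ ⋃ j ∈ Set.Iio i, (fun v => v * t j) '' (c j : Set G) := by
    rintro x ⟨j, hj, v, hv, rfl⟩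
    exact Set.mem_biUnion hj ⟨v, hv, rfl⟩
  refine (Cardinal.mk_le_mk_of_subset hsub).trans_lt ?_
  exact small_biUnion (hseg i) fun j => ((c j).finite_toSet.image _)

theorem sh_small (t : I → G) (i : I) : #(sh c t i) < #G := by
  have hsub : sh c t i ⊆
      ⋃ z ∈ (Set.Iio i ×ˢ Set.Iio i : Set (I × I)),
        ⋃ v ∈ (c z.2 : Set G), {u : G | u * t z.1 = v * t z.2} := by
    rintro u ⟨m, hm, j, hj, _, v, hv, he⟩
    exact Set.mem_biUnion (Set.mk_mem_prod hm hj) (Set.mem_biUnion hv he)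
  refine (Cardinal.mk_le_mk_of_subset hsub).trans_lt ?_
  refine small_biUnion (small_prod (hseg i) (hseg i)) fun z => ?_
  exact Set.Finite.biUnion (c z.2).finite_toSet fun v _ => (hwc (t z.1) (v * t z.2)).2

theorem nsh_small (t : I → G) (i : I) (tt : G) : #(nsh c t i tt) < #G := by
  have hsub : nsh c t i tt ⊆
      (⋃ m ∈ Set.Iio i, ⋃ v ∈ (c i : Set G), {u : G | u * t m = v * tt}) ∪
      (⋃ x ∈ blocks c t i, {u : G | u * tt = x}) := by
    rintro u (⟨m, hm, v, hv, he⟩ | hb)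
    · exact Or.inl (Set.mem_biUnion hm (Set.mem_biUnion hv he))
    · exact Or.inr (Set.mem_biUnion hb rfl)
  refine (Cardinal.mk_le_mk_of_subset hsub).trans_lt (small_union ?_ ?_)
  · refine small_biUnion (hseg i) fun m => ?_
    exact Set.Finite.biUnion (c i).finite_toSet fun v _ => (hwc (t m) (v * tt)).2
  · exact small_biUnion (blocks_small hwc hseg t i) fun x => (hwc tt x).2

theorem badSet_small (t : I → G) (i : I) {Y : Set G} (hY : #Y < #G) :
    #(badSet c t i Y) < #G := by
  have hsub : badSet c t i Y ⊆
      (⋃ z ∈ (Y ×ˢ Set.Iio i : Set (G × I)),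
        ⋃ v ∈ (c i : Set G), {tt : G | v * tt = z.1 * t z.2}) ∪
      (⋃ z ∈ (Y ×ˢ blocks c t i : Set (G × G)), {tt : G | z.1 * tt = z.2}) := by
    rintro tt ⟨u, hu, (⟨m, hm, v, hv, he⟩ | hb)⟩
    · exact Or.inl (Set.mem_biUnion (Set.mk_mem_prod hu hm) (Set.mem_biUnion hv he.symm))
    · exact Or.inr (Set.mem_biUnion (Set.mk_mem_prod hu hb) rfl)
  refine (Cardinal.mk_le_mk_of_subset hsub).trans_lt (small_union ?_ ?_)
  · refine small_biUnion (small_prod hY (hseg i)) fun z => ?_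
    exact Set.Finite.biUnion (c i).finite_toSet fun v _ => (hwc v (z.1 * t z.2)).1
  · exact small_biUnion (small_prod hY (blocks_small hwc hseg t i)) fun z => (hwc z.1 z.2).1

theorem exists_good (t : I → G) (i : I) {Y : Set G} (hY : #Y < #G) :
    ∃ tt : G, tt ∉ badSet c t i Y := by
  by_contra h
  push_neg at h
  have huniv : badSet c t i Y = Set.univ := Set.eq_univ_iff_forall.mpr h
  have := badSet_small hwc (c := c) hseg t i hY
  rw [huniv, Cardinal.mk_univ] at this
  exact lt_irrefl _ this

end small

section recursion

variable [WellFoundedLT I]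

noncomputable def goodPt (c : I → Finset G) (g0 : G) (t : I → G) (i : I) (Y : Set G) : G :=
  @dite _ (∃ tt : G, tt ∉ badSet c t i Y) (Classical.dec _) (fun h => h.choose) fun _ => g0

theorem goodPt_spec {c : I → Finset G} {g0 : G} {t : I → G} {i : I} {Y : Set G}
    (h : ∃ tt : G, tt ∉ badSet c t i Y) : goodPt c g0 t i Y ∉ badSet c t i Y := by
  rw [goodPt, dif_pos h]
  exact h.choose_spec


noncomputable def sysStep (c : I → Finset G) (g0 : G) (i : I)
    (prev : ∀ j, j < i → G × G) : G × G :=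
  let f1 : I → G := fun j => if h : j < i then (prev j h).1 else g0
  let f2 : I → G := fun j => if h : j < i then (prev j h).2 else g0
  let tt1 := goodPt c g0 f1 i (sh c f2 i)
  (tt1, goodPt c g0 f2 i (sh c f1 i ∪ nsh c f1 i tt1))

noncomputable def sys (c : I → Finset G) (g0 : G) : I → G × G :=
  (wellFounded_lt).fix (sysStep c g0)

theorem sys_eq (c : I → Finset G) (g0 : G) (i : I) :
    sys c g0 i = sysStep c g0 i fun j _ => sys c g0 j :=
  WellFounded.fix_eq _ _ _

/-- First coordinate system. -/
noncomputable def sysA (c : I → Finset G) (g0 : G) : I → G := fun i => (sys c g0 i).1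

/-- Second coordinate system. -/
noncomputable def sysB (c : I → Finset G) (g0 : G) : I → G := fun i => (sys c g0 i).2

variable (hwc : ∀ s t : G, {u : G | s * u = t}.Finite ∧ {u : G | u * s = t}.Finite)
variable {c : I → Finset G} (hseg : ∀ i : I, #(Set.Iio i) < #G)

include hwc hseg

theorem sys_spec (g0 : G) (i : I) :
    sysA c g0 i ∉ badSet c (sysA c g0) i (sh c (sysB c g0) i) ∧
    sysB c g0 i ∉ badSet c (sysB c g0) i
      (sh c (sysA c g0) i ∪ nsh c (sysA c g0) i (sysA c g0 i)) := by
  have h := sys_eq c g0 i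
  set f1 : I → G := fun j => if h : j < i then (sys c g0 j).1 else g0 with hf1
  set f2 : I → G := fun j => if h : j < i then (sys c g0 j).2 else g0 with hf2
  have hag1 : ∀ j, j < i → sysA c g0 j = f1 j := fun j hj => by
    simp only [hf1, sysA, dif_pos hj]
  have hag2 : ∀ j, j < i → sysB c g0 j = f2 j := fun j hj => by
    simp only [hf2, sysB, dif_pos hj]
  have h1 : sysA c g0 i = goodPt c g0 f1 i (sh c f2 i) := by
    show (sys c g0 i).1 = _
    rw [h]
    rfl
  have h2 : sysB c g0 i =
      goodPt c g0 f2 i (sh c f1 i ∪ nsh c f1 i (goodPt c g0 f1 i (sh c f2 i))) := by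
    show (sys c g0 i).2 = _
    rw [h]
    rfl
  constructor
  · rw [h1, badSet_congr hag1, sh_congr hag2]
    exact goodPt_spec (exists_good hwc hseg f1 i (sh_small hwc hseg f2 i))
  · rw [h2, badSet_congr hag2, sh_congr hag1, h1, nsh_congr hag1]
    exact goodPt_spec (exists_good hwc hseg f2 i
      (small_union (sh_small hwc hseg f1 i)
        (nsh_small hwc hseg f1 i (goodPt c g0 f1 i (sh c f2 i)))))

theorem sys_spec1 (g0 : G) (i : I) :
    ∀ u ∈ sh c (sysB c g0) i, u ∉ nsh c (sysA c g0) i (sysA c g0 i) := by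
  have h := (sys_spec hwc (c := c) hseg g0 i).1
  intro u hu hnu
  exact h ⟨u, hu, hnu⟩

theorem sys_spec2 (g0 : G) (i : I) :
    ∀ u ∈ sh c (sysA c g0) i ∪ nsh c (sysA c g0) i (sysA c g0 i),
      u ∉ nsh c (sysB c g0) i (sysB c g0 i) := by
  have h := (sys_spec hwc (c := c) hseg g0 i).2
  intro u hu hnu
  exact h ⟨u, hu, hnu⟩

end recursion

section disj

variable [WellFoundedLT I]
variable {c : I → Finset G} {t : I → G}

theorem mem_nsh_of_max {u v : G} {m j σ : I} (hm : m ≤ σ) (hj : j ≤ σ)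
    (hmax : m = σ ∨ j = σ) (hmj : m ≠ j) (hv : v ∈ c j) (he : u * t m = v * t j) :
    u ∈ nsh c t σ (t σ) := by
  rcases hmax with rfl | rfl
  · have hj' : j < m := lt_of_le_of_ne hj fun h => hmj h.symm
    exact Or.inr ⟨j, hj', v, hv, he⟩
  · have hm' : m < j := lt_of_le_of_ne hm hmj
    exact Or.inl ⟨m, hm', v, hv, he⟩

theorem mem_sh_or_nsh_of_le {u v : G} {m j σ : I} (hm : m ≤ σ) (hj : j ≤ σ)
    (hmj : m ≠ j) (hv : v ∈ c j) (he : u * t m = v * t j) :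
    u ∈ sh c t σ ∪ nsh c t σ (t σ) := by
  rcases eq_or_lt_of_le hm with rfl | hm'
  · exact Or.inr (mem_nsh_of_max le_rfl hj (Or.inl rfl) hmj hv he)
  · rcases eq_or_lt_of_le hj with rfl | hj'
    · exact Or.inr (mem_nsh_of_max hm le_rfl (Or.inr rfl) hmj hv he)
    · exact Or.inl ⟨m, hm', j, hj', hmj, v, hv, he⟩

variable (hwc : ∀ s t : G, {u : G | s * u = t}.Finite ∧ {u : G | u * s = t}.Finite)
variable (hseg : ∀ i : I, #(Set.Iio i) < #G)

include hwc hseg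

theorem disj_aux (g0 : G) {u v v' : G} {m j m' j' : I} (hmj : m ≠ j) (hmj' : m' ≠ j')
    (hv : v ∈ c j) (hv' : v' ∈ c j') (he : u * sysA c g0 m = v * sysA c g0 j)
    (he' : u * sysB c g0 m' = v' * sysB c g0 j') (h : max m j ≤ max m' j') : False := by
  have hu1 : u ∈ sh c (sysA c g0) (max m' j') ∪
      nsh c (sysA c g0) (max m' j') (sysA c g0 (max m' j')) :=
    mem_sh_or_nsh_of_le ((le_max_left m j).trans h) ((le_max_right m j).trans h) hmj hv he
  have hmax : m' = max m' j' ∨ j' = max m' j' := by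
    rcases max_choice m' j' with h' | h'
    · exact Or.inl h'.symm
    · exact Or.inr h'.symm
  have hu2 : u ∈ nsh c (sysB c g0) (max m' j') (sysB c g0 (max m' j')) :=
    mem_nsh_of_max (le_max_left _ _) (le_max_right _ _) hmax hmj' hv' he'
  exact sys_spec2 hwc (c := c) hseg g0 (max m' j') u hu1 hu2

theorem SH_disj (g0 : G) :
    ∀ u, u ∈ SH c (sysA c g0) → u ∈ SH c (sysB c g0) → False := by
  rintro u ⟨m, j, hmj, v, hv, he⟩ ⟨m', j', hmj', v', hv', he'⟩
  rcases le_total (max m j) (max m' j') with h | h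
  · exact disj_aux hwc hseg g0 hmj hmj' hv hv' he he' h
  · rcases eq_or_lt_of_le h with heq | hlt
    · exact disj_aux hwc hseg g0 hmj hmj' hv hv' he he' heq.ge
    · have hu2 : u ∈ sh c (sysB c g0) (max m j) :=
        ⟨m', (le_max_left m' j').trans_lt hlt, j', (le_max_right m' j').trans_lt hlt,
          hmj', v', hv', he'⟩
      have hmax : m = max m j ∨ j = max m j := by
        rcases max_choice m j with h' | h'
        · exact Or.inl h'.symm
        · exact Or.inr h'.symm
      have hu1 : u ∈ nsh c (sysA c g0) (max m j) (sysA c g0 (max m j)) :=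
        mem_nsh_of_max (le_max_left _ _) (le_max_right _ _) hmax hmj hv he
      exact sys_spec1 hwc (c := c) hseg g0 (max m j) u hu2 hu1

end disj

section final

variable {c : I → Finset G} {p : Ultrafilter G}

theorem final_contra (hcsurj : ∀ F : Finset G, ∃ i, c i = F)
    (hrc : ∀ u v s : G, u * s = v * s → u = v)
    (hcont : Continuous fun q => umul p q)
    (hfin : ∀ Y : Set G, Y.Finite → Y ∉ p)
    (t : I → G) (hSH : SH c t ∉ p) : False := by
  classical
  set A : Set G := {x | ∃ j, ∃ v ∈ c j, x = v * t j} with hA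
  set R : G → Set G := fun s => {tt | s * tt ∈ A} with hR
  set S : Set (Set G) := insert (Set.range t) (Set.range R) with hS
  have keyw : ∀ d : Set G, ∃ s : G, (∃ s', R s' = d) → R s = d := by
    intro d
    by_cases h : ∃ s', R s' = d
    · obtain ⟨s', hs'⟩ := h
      exact ⟨s', fun _ => hs'⟩
    · exact ⟨Classical.arbitrary G, fun hx => absurd hx h⟩
  choose w hw using keyw
  have hFIP : ∀ T, T ⊆ S → T.Finite → (⋂₀ T).Nonempty := by
    intro T hTS hTfin
    obtain ⟨i, hi⟩ := hcsurj (hTfin.toFinset.image w)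
    refine ⟨t i, Set.mem_sInter.mpr fun d hd => ?_⟩
    rcases Set.mem_insert_iff.mp (hTS hd) with rfl | hmem
    · exact ⟨i, rfl⟩
    · obtain ⟨s', hs'⟩ := hmem
      have hwd : R (w d) = d := hw d ⟨s', hs'⟩
      have hwF : w d ∈ c i := by
        rw [hi]
        exact Finset.mem_image_of_mem w (hTfin.mem_toFinset.mpr hd)
      rw [← hwd]
      show w d * t i ∈ A
      exact ⟨i, w d, hwF, rfl⟩
  haveI hgen : (Filter.generate S).NeBot := Filter.generate_neBot_iff.mpr hFIP
  set q : Ultrafilter G := Ultrafilter.of (Filter.generate S) with hq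
  have hmemq : ∀ d ∈ S, d ∈ q := fun d hd =>
    Filter.le_def.mp (Ultrafilter.of_le (Filter.generate S)) d (Filter.mem_generate_of_mem hd)
  have hAq : A ∈ umul p q := by
    rw [mem_umul]
    have huniv : {s : G | {tt | s * tt ∈ A} ∈ q} = Set.univ :=
      Set.eq_univ_iff_forall.mpr fun s => hmemq (R s) (Set.mem_insert_of_mem _ ⟨s, rfl⟩)
    rw [huniv]
    exact Filter.univ_mem
  have h1 : {r : Ultrafilter G | A ∈ r} ∈ nhds (umul p q) :=
    (ultrafilter_isOpen_basic A).mem_nhds hAq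
  have h2 : (fun r => umul p r) ⁻¹' {r : Ultrafilter G | A ∈ r} ∈ nhds q :=
    (hcont.continuousAt (x := q)).preimage_mem_nhds h1
  rw [ultrafilterBasis_is_basis.mem_nhds_iff] at h2
  obtain ⟨V, ⟨C, rfl⟩, hqV, hVsub⟩ := h2
  have hCq : C ∈ q := hqV
  have hBq : Set.range t ∈ q := hmemq _ (Set.mem_insert _ _)
  have hint : C ∩ Set.range t ∈ q := Filter.inter_mem hCq hBq
  obtain ⟨x, hxC, hxB⟩ := Ultrafilter.nonempty_of_mem hint
  obtain ⟨i, rfl⟩ := hxB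
  have hpure : A ∈ umul p (pure (t i)) :=
    hVsub (show (pure (t i) : Ultrafilter G) ∈ {u : Ultrafilter G | C ∈ u} from
      Ultrafilter.mem_pure.mpr hxC)
  have hcol : {s : G | s * t i ∈ A} ∈ p := by
    rw [mem_umul] at hpure
    have hset : {s : G | {tt | s * tt ∈ A} ∈ (pure (t i) : Ultrafilter G)} =
        {s : G | s * t i ∈ A} := by
      ext s
      exact Ultrafilter.mem_pure
    rwa [hset] at hpure
  have hsub : {s : G | s * t i ∈ A} ⊆ ↑(c i) ∪ SH c t := by
    intro u hu
    obtain ⟨j, v, hv, he⟩ := hu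
    by_cases hij : j = i
    · subst hij
      left
      have huv : u = v := hrc u v (t j) he
      rwa [huv]
    · right
      exact ⟨i, j, fun h => hij h.symm, v, hv, he⟩
  have hup : ↑(c i) ∪ SH c t ∈ p := Filter.mem_of_superset hcol hsub
  rcases Ultrafilter.union_mem_iff.mp hup with h | h
  · exact hfin _ (c i).finite_toSet h
  · exact hSH h

end final

end Stmt14Aux

theorem stmt14 {G : Type u} [Semigroup G] [Infinite G]
    (hwc : ∀ s t : G, {u : G | s * u = t}.Finite ∧ {u : G | u * s = t}.Finite)
    (hrc : ∀ u v s : G, u * s = v * s → u = v)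
    (p : Ultrafilter G) :
    Continuous (fun q => umul p q) ↔ p ∈ Set.range (pure : G → Ultrafilter G) := by
  constructor
  · intro hcont
    by_contra hnp
    have hfin : ∀ Y : Set G, Y.Finite → Y ∉ p := by
      intro Y hYfin hYp
      obtain ⟨x, _, hx⟩ := Ultrafilter.eq_pure_of_finite_mem hYfin hYp
      exact hnp ⟨x, hx.symm⟩
    have hcardeq : #((#G).ord.ToType) = #(Finset G) := by
      rw [Cardinal.mk_toType, Cardinal.card_ord, Cardinal.mk_finset_of_infinite]
    obtain ⟨ε⟩ := Cardinal.eq.mp hcardeq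
    set c : (#G).ord.ToType → Finset G := fun i => ε i with hc
    have hcsurj : ∀ F : Finset G, ∃ i, c i = F := fun F => ⟨ε.symm F, by simp [hc]⟩
    have hseg : ∀ i : (#G).ord.ToType, #(Set.Iio i) < #G := fun i =>
      Cardinal.mk_Iio_ord_toType i
    have hGne : Nonempty G := inferInstance
    set g0 : G := Classical.arbitrary G with hg0
    by_cases h1 : Stmt14Aux.SH c (Stmt14Aux.sysA c g0) ∈ p
    · have h2 : Stmt14Aux.SH c (Stmt14Aux.sysB c g0) ∉ p := by
        intro h2
        have hint := Filter.inter_mem h1 h2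
        obtain ⟨u, hu1, hu2⟩ := Ultrafilter.nonempty_of_mem hint
        exact Stmt14Aux.SH_disj hwc hseg g0 u hu1 hu2
      exact Stmt14Aux.final_contra hcsurj hrc hcont hfin (Stmt14Aux.sysB c g0) h2
    · exact Stmt14Aux.final_contra hcsurj hrc hcont hfin (Stmt14Aux.sysA c g0) h1
  · rintro ⟨s0, rfl⟩
    have heq : (fun q : Ultrafilter G => umul (pure s0) q) =
        fun q : Ultrafilter G => Ultrafilter.map (fun t => s0 * t) q := by
      funext q
      ext A
      rw [mem_umul, Ultrafilter.mem_map, Ultrafilter.mem_pure]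
      rfl
    rw [heq]
    refine ultrafilterBasis_is_basis.continuous_iff.mpr ?_
    rintro s ⟨A, rfl⟩
    exact ultrafilter_isOpen_basic ((fun t => s0 * t) ⁻¹' A)
end

section
/- Let G be a compact Hausdorff abelian topological group and let H be a closed totally disconnected subgroup of G. If the Pontryagin dual of the quotient group G/H has finite torsion-free rank, then the Pontryagin dual of G has finite torsion-free rank. -/
open scoped TensorProduct

private lemma circle_pow_re_nonpos (z : Circle) (hz : z ≠ 1) :
    ∃ n : ℕ, ((z ^ n : Circle) : ℂ).re ≤ 0 := by
  set θ := Complex.arg (z : ℂ) with hθdef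
  have hθ0 : θ ≠ 0 := by
    intro h
    apply hz
    rw [← Circle.exp_arg z, ← hθdef, h, Circle.exp_zero]
  have habs : 0 < |θ| := abs_pos.mpr hθ0
  have habs' : |θ| ≤ Real.pi :=
    abs_le.mpr ⟨(Complex.neg_pi_lt_arg _).le, Complex.arg_le_pi _⟩
  set n : ℕ := ⌈(Real.pi / 2) / |θ|⌉₊ with hndef
  have h1 : Real.pi / 2 ≤ (n : ℝ) * |θ| := (div_le_iff₀ habs).mp (Nat.le_ceil _)
  have h2 : (n : ℝ) * |θ| ≤ Real.pi + Real.pi / 2 := by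
    have : (n : ℝ) ≤ (Real.pi / 2) / |θ| + 1 :=
      (Nat.ceil_lt_add_one (by positivity)).le
    have h3 : (n : ℝ) * |θ| ≤ ((Real.pi / 2) / |θ| + 1) * |θ| :=
      mul_le_mul_of_nonneg_right this habs.le
    rw [add_mul, div_mul_cancel₀ _ habs.ne'] at h3
    linarith
  have hcos : Real.cos ((n : ℝ) * |θ|) ≤ 0 :=
    Real.cos_nonpos_of_pi_div_two_le_of_le h1 h2
  refine ⟨n, ?_⟩
  have hz' : ((z ^ n : Circle) : ℂ) = Complex.exp (((n : ℝ) * θ : ℝ) * Complex.I) := by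
    have hcp : ((z ^ n : Circle) : ℂ) = ((z : ℂ)) ^ n := map_pow Circle.coeHom z n
    rw [hcp, ← Circle.exp_arg z, ← hθdef, Circle.coe_exp, ← Complex.exp_nat_mul]
    push_cast
    ring_nf
  rw [hz', Complex.exp_ofReal_mul_I_re]
  calc Real.cos ((n : ℝ) * θ) = Real.cos (|(n : ℝ) * θ|) := (Real.cos_abs _).symm
    _ = Real.cos ((n : ℝ) * |θ|) := by rw [abs_mul, Nat.abs_cast]
    _ ≤ 0 := hcos

private lemma key_pow {G : Type*} [CommGroup G] [TopologicalSpace G] [IsTopologicalGroup G]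
    [CompactSpace G] [T2Space G]
    (H : Subgroup G) (hHclosed : IsClosed (H : Set G))
    (hHtd : IsTotallyDisconnected (H : Set G)) (χ : PontryaginDual G) :
    ∃ n : ℕ, 0 < n ∧ ∀ h ∈ H, χ h ^ n = 1 := by
  haveI : CompactSpace ↥H := isCompact_iff_compactSpace.mp (hHclosed.isCompact)
  haveI : TotallyDisconnectedSpace ↥H := totallyDisconnectedSpace_subtype_iff.mpr hHtd
  let f : ↥H → Circle := fun h => χ (h : G)
  have hf : Continuous f := χ.continuous.comp continuous_subtype_val
  have hre : Continuous fun z : Circle => (z : ℂ).re :=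
    Complex.continuous_re.comp continuous_subtype_val
  have hUopen : IsOpen (f ⁻¹' {z : Circle | 0 < (z : ℂ).re}) :=
    (isOpen_lt continuous_const hre).preimage hf
  have h1U : (1 : ↥H) ∈ f ⁻¹' {z : Circle | 0 < (z : ℂ).re} := by
    simp [f, map_one χ]
  obtain ⟨V, hV, h1V, hVU⟩ := compact_exists_isClopen_in_isOpen hUopen h1U
  obtain ⟨S, hS⟩ := IsTopologicalGroup.exist_openSubgroup_sub_clopen_nhds_of_one hV h1V
  haveI : Finite (↥H ⧸ S.toSubgroup) := S.toSubgroup.quotient_finite_of_isOpen S.isOpen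
  haveI : S.toSubgroup.FiniteIndex := S.toSubgroup.finiteIndex_of_finite_quotient
  haveI : S.toSubgroup.Normal := Subgroup.normal_of_comm _
  have hStriv : ∀ x ∈ S.toSubgroup, f x = 1 := by
    intro x hx
    by_contra hne
    obtain ⟨m, hrem⟩ := circle_pow_re_nonpos (f x) hne
    have hmem : x ^ m ∈ S.toSubgroup := pow_mem hx m
    have hpos : 0 < ((f (x ^ m) : Circle) : ℂ).re := hVU (hS hmem)
    have : f (x ^ m) = f x ^ m := by
      simp only [f, SubmonoidClass.coe_pow, map_pow]
    rw [this] at hpos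
    exact absurd hpos (not_lt.mpr hrem)
  refine ⟨S.toSubgroup.index, Nat.pos_of_ne_zero Subgroup.FiniteIndex.index_ne_zero, ?_⟩
  intro h hh
  have hmem : (⟨h, hh⟩ : ↥H) ^ S.toSubgroup.index ∈ S.toSubgroup :=
    Subgroup.pow_index_mem _ _
  have := hStriv _ hmem
  simpa only [f, SubmonoidClass.coe_pow, map_pow] using this

private lemma cmh_pow_apply {A E : Type*} [Monoid A] [TopologicalSpace A] [CommGroup E]
    [TopologicalSpace E] [IsTopologicalGroup E]
    (f : ContinuousMonoidHom A E) (n : ℕ) (x : A) : (f ^ n) x = f x ^ n := by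
  induction n with
  | zero => rw [pow_zero, pow_zero]; rfl
  | succ n ih => rw [pow_succ, pow_succ, ← ih]; rfl

open Additive in
theorem stmt18 {G : Type*} [CommGroup G] [TopologicalSpace G] [IsTopologicalGroup G]
    [CompactSpace G] [T2Space G]
    (H : Subgroup G) (hHclosed : IsClosed (H : Set G))
    (hHtd : IsTotallyDisconnected (H : Set G)) :
    Module.rank ℚ (ℚ ⊗[ℤ] Additive (PontryaginDual (G ⧸ H))) < Cardinal.aleph0 →
    Module.rank ℚ (ℚ ⊗[ℤ] Additive (PontryaginDual G)) < Cardinal.aleph0 := by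
  intro hfin
  let q : ContinuousMonoidHom G (G ⧸ H) :=
    ⟨QuotientGroup.mk' H, QuotientGroup.continuous_mk⟩
  let Φ := PontryaginDual.map q
  let fℤ : Additive (PontryaginDual (G ⧸ H)) →ₗ[ℤ] Additive (PontryaginDual G) :=
    (MonoidHom.toAdditive Φ.toMonoidHom).toIntLinearMap
  let F := LinearMap.baseChange ℚ fℤ
  have hsurj : Function.Surjective F := by
    intro x
    induction x using TensorProduct.induction_on with
    | zero => exact ⟨0, map_zero F⟩
    | tmul r a =>
      obtain ⟨n, hn, hker⟩ := key_pow H hHclosed hHtd a.toMul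
      have hle : H ≤ ((a.toMul : PontryaginDual G).toMonoidHom ^ n).ker := by
        intro g hg
        simp only [MonoidHom.mem_ker, MonoidHom.pow_apply]
        exact hker g hg
      have hcont : Continuous (QuotientGroup.lift H
          ((a.toMul : PontryaginDual G).toMonoidHom ^ n) hle) := by
        rw [(QuotientGroup.isQuotientMap_mk H).continuous_iff]
        have : (QuotientGroup.lift H ((a.toMul : PontryaginDual G).toMonoidHom ^ n) hle)
            ∘ (QuotientGroup.mk : G → G ⧸ H)
            = fun g => (a.toMul : PontryaginDual G) g ^ n := by
          funext g; rfl
        rw [this]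
        exact ((map_continuous (a.toMul : PontryaginDual G)).pow n)
      let ψ : PontryaginDual (G ⧸ H) :=
        ⟨QuotientGroup.lift H ((a.toMul : PontryaginDual G).toMonoidHom ^ n) hle, hcont⟩
      have hΦψ : Φ ψ = a.toMul ^ n := by
        apply ContinuousMonoidHom.ext
        intro g
        show ((a.toMul : PontryaginDual G).toMonoidHom ^ n) g = (a.toMul ^ n) g
        rw [MonoidHom.pow_apply]
        exact (cmh_pow_apply (a.toMul : G →ₜ* Circle) n g).symm
      refine ⟨(((n : ℚ)⁻¹) * r) ⊗ₜ Additive.ofMul ψ, ?_⟩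
      have hF : F ((((n : ℚ)⁻¹) * r) ⊗ₜ Additive.ofMul ψ)
          = (((n : ℚ)⁻¹) * r) ⊗ₜ Additive.ofMul (Φ ψ) := rfl
      rw [hF, hΦψ, ofMul_pow, TensorProduct.tmul_smul, ← Nat.cast_smul_eq_nsmul ℚ,
        TensorProduct.smul_tmul', smul_eq_mul, ← mul_assoc,
        mul_inv_cancel₀ (by exact_mod_cast hn.ne' : (n : ℚ) ≠ 0), one_mul,
        ofMul_toMul]
    | add x y hx hy =>
      obtain ⟨u, hu⟩ := hx
      obtain ⟨v, hv⟩ := hy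
      exact ⟨u + v, by rw [map_add, hu, hv]⟩
  exact lt_of_le_of_lt (LinearMap.rank_le_of_surjective F hsurj) hfin
end

section
/- Let (G_i)_{i∈I} be a family of topological groups and let G = ∏_{i∈I} G_i carry the product topology. Let K be a topological group admitting a neighborhood U of its identity such that the only subgroup of K whose underlying set is contained in U is the trivial subgroup. Then for every continuous group homomorphism f : G → K there is a finite subset F ⊆ I such that f(g) = 1 for every g ∈ G with g_i = 1 for all i ∈ F; in particular, the subgroup {g ∈ G : g_i = 1 for all i ∈ F} is contained in the kernel of f. -/
/-!
STATEMENT 19.  `(G_i)_{i ∈ I}` topological groups, `G = ∏ i, G_i` with the product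
topology, and `K` a topological group with a neighborhood `U` of the identity
containing no nontrivial subgroup.  Then every continuous homomorphism
`f : G → K` kills a co-finite sub-product: there is a finite `F ⊆ I` such that
`f g = 1` whenever `g i = 1` for all `i ∈ F`; in particular the subgroup
`{g : ∀ i ∈ F, g i = 1}` lies in the kernel of `f`.
-/

theorem stmt19 {I : Type*} {G : I → Type*} [∀ i, Group (G i)]
    [∀ i, TopologicalSpace (G i)] [∀ i, IsTopologicalGroup (G i)]
    {K : Type*} [Group K] [TopologicalSpace K] [IsTopologicalGroup K]
    (U : Set K) (hU : U ∈ nhds (1 : K))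
    (hns : ∀ H : Subgroup K, (H : Set K) ⊆ U → H = ⊥)
    (f : (∀ i, G i) →* K) (hf : Continuous f) :
    ∃ F : Finset I, ∀ g : ∀ i, G i, (∀ i ∈ F, g i = 1) → f g = 1 := by
  have hpre : f ⁻¹' U ∈ nhds (1 : ∀ i, G i) :=
    hf.continuousAt (x := (1 : ∀ i, G i)) (by rwa [map_one])
  rw [nhds_pi, Filter.mem_pi'] at hpre
  obtain ⟨F, V, hV, hVsub⟩ := hpre
  refine ⟨F, ?_⟩
  have key : ∀ g : ∀ i, G i, (∀ i ∈ F, g i = 1) → f g ∈ U := by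
    intro g hg
    apply hVsub
    intro i hi
    rw [hg i hi]
    exact mem_of_mem_nhds (hV i)
  intro g hg
  set H : Subgroup (∀ i, G i) :=
    ⨅ i ∈ F, (⊥ : Subgroup (G i)).comap (Pi.evalMonoidHom G i) with hH
  have hmem : ∀ y : ∀ i, G i, y ∈ H ↔ ∀ i ∈ F, y i = 1 := by
    intro y
    simp [hH, Subgroup.mem_iInf, Subgroup.mem_comap, Subgroup.mem_bot]
  have hmap : ((H.map f : Subgroup K) : Set K) ⊆ U := by
    rintro x ⟨y, hy, rfl⟩
    exact key y ((hmem y).mp hy)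
  have hfg : f g ∈ H.map f := ⟨g, (hmem g).mpr hg, rfl⟩
  rwa [hns _ hmap, Subgroup.mem_bot] at hfg
end
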